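/- arXiv:2301.02908 — 7 statements merged into one kernel-verified Lean document; each statement's English description precedes it below -/
import Mathlib

section
/- Let $X$ be a complete metric space and $0<\lambda<1$. Suppose $\mathcal{F}$ is a non-empty family of non-empty closed subsets of $X$ such that for every $F\in\mathcal{F}$, every $x\in X$ and $r>0$ with $B(x;r)\cap F\neq\varnothing$, there exists $J\in\mathcal{F}$ with $\varnothing\neq J\cap B(x;r)\subseteq F\cap B(x;r)$ and such that $F\cap B(x;r)$ is not $\lambda$-porous at any point of $J\cap B(x;r)$. Then no set in $\mathcal{F}$ is $\sigma$-$\lambda$-porous. -/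
open MeasureTheory Metric Set ENNReal

/-- `E` is `lam`-porous at `x`: for every `δ > 0` there is `y ∈ B(x;δ) \ {x}` with
`B(y; lam * d(x,y)) ∩ E = ∅`. -/
def PorousAt {X : Type*} [PseudoMetricSpace X] (lam : ℝ) (E : Set X) (x : X) : Prop :=
  ∀ δ > 0, ∃ y ∈ Metric.ball x δ, y ≠ x ∧ Metric.ball y (lam * dist x y) ∩ E = ∅

/-- `E` is `lam`-porous if it is `lam`-porous at each of its points. -/
def Porous {X : Type*} [PseudoMetricSpace X] (lam : ℝ) (E : Set X) : Prop :=
  ∀ x ∈ E, PorousAt lam E x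

/-- `E` is `σ`-`lam`-porous if it is a countable union of `lam`-porous sets. -/
def SigmaPorousFor {X : Type*} [PseudoMetricSpace X] (lam : ℝ) (E : Set X) : Prop :=
  ∃ S : ℕ → Set X, (∀ n, Porous lam (S n)) ∧ E = ⋃ n, S n

/-- `E` is `σ`-porous if it is a countable union of sets, each `lam`-porous for
some `0 < lam < 1`. -/
def SigmaPorous {X : Type*} [PseudoMetricSpace X] (E : Set X) : Prop :=
  ∃ S : ℕ → Set X, (∀ n, ∃ lam : ℝ, 0 < lam ∧ lam < 1 ∧ Porous lam (S n)) ∧ E = ⋃ n, S n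

/-!
Suppose `F₀ ∈ 𝓕` is the union of `λ`-porous sets `Sₙ`. We build nested portions
`Fₙ ∩ B̄(xₙ, rₙ)` with `Fₙ ∈ 𝓕`, `xₙ ∈ Fₙ` and `rₙ → 0` such that the `(n+1)`-st misses `Sₙ`.
Given a portion of `F`, the hypothesis yields `J ∈ 𝓕` whose portion inside it is a set of points
of non-porosity of the portion of `F`. Either that portion of `J` misses `Sₙ`, or it contains a
point `z ∈ Sₙ`; since `Sₙ` is porous at `z` while the portion of `F` is not, some hole of `Sₙ`
near `z` meets the portion of `F`, and a small ball around a common point works. By completeness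
the portions have a common point; it lies in `F₀` but in no `Sₙ`.
-/

open Filter Topology

section

variable {X : Type*} [PseudoMetricSpace X] {lam : ℝ}

def HasNonporousSubportions (lam : ℝ) (𝓕 : Set (Set X)) : Prop :=
  ∀ F ∈ 𝓕, ∀ x : X, ∀ r > (0 : ℝ), (Metric.ball x r ∩ F).Nonempty →
    ∃ J ∈ 𝓕, (J ∩ Metric.ball x r).Nonempty ∧
      J ∩ Metric.ball x r ⊆ F ∩ Metric.ball x r ∧
      ∀ z ∈ J ∩ Metric.ball x r, ¬ PorousAt lam (F ∩ Metric.ball x r) z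

theorem exists_hole_inter_nonempty_of_porousAt_of_not_porousAt {S E : Set X} {z : X}
    (hS : PorousAt lam S z) (hE : ¬ PorousAt lam E z) :
    ∃ y, (ball y (lam * dist z y) ∩ E).Nonempty ∧ ball y (lam * dist z y) ∩ S = ∅ := by
  unfold PorousAt at hE
  push Not at hE
  obtain ⟨δ, hδ, hδE⟩ := hE
  obtain ⟨y, hy, hyz, hyS⟩ := hS δ hδ
  exact ⟨y, hδE y hy hyz, hyS⟩

theorem HasNonporousSubportions.exists_isOpen_disjoint {𝓕 : Set (Set X)}
    (h𝓕 : HasNonporousSubportions lam 𝓕) {S F : Set X} (hS : Porous lam S) (hF : F ∈ 𝓕)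
    {x : X} (hx : x ∈ F) {r : ℝ} (hr : 0 < r) :
    ∃ F' ∈ 𝓕, ∃ U : Set X, IsOpen U ∧ (F' ∩ U).Nonempty ∧ U ⊆ ball x r ∧ F' ∩ U ⊆ F ∧
      Disjoint S (F' ∩ U) := by
  obtain ⟨J, hJ, hJne, hJsub, hJnp⟩ := h𝓕 F hF x r hr ⟨x, mem_ball_self hr, hx⟩
  by_cases hSJ : (S ∩ (J ∩ ball x r)).Nonempty
  · obtain ⟨z, hzS, hzJ⟩ := hSJ
    obtain ⟨y, ⟨w, hwy, hwF, hwx⟩, hyS⟩ :=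
      exists_hole_inter_nonempty_of_porousAt_of_not_porousAt (hS z hzS) (hJnp z hzJ)
    refine ⟨F, hF, ball y (lam * dist z y) ∩ ball x r, isOpen_ball.inter isOpen_ball,
      ⟨w, hwF, hwy, hwx⟩, inter_subset_right, inter_subset_left, ?_⟩
    exact (disjoint_iff_inter_eq_empty.2 hyS).symm.mono_right
      (inter_subset_right.trans inter_subset_left)
  · refine ⟨J, hJ, ball x r, isOpen_ball, hJne, subset_rfl, fun q hq => (hJsub hq).1, ?_⟩
    exact disjoint_iff_inter_eq_empty.2 (not_nonempty_iff_eq_empty.1 hSJ)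

structure Portion (𝓕 : Set (Set X)) where
  set : Set X
  center : X
  radius : ℝ
  set_mem : set ∈ 𝓕
  center_mem : center ∈ set
  radius_pos : 0 < radius

namespace Portion

variable {𝓕 : Set (Set X)}

def carrier (p : Portion 𝓕) : Set X := p.set ∩ closedBall p.center p.radius

theorem center_mem_carrier (p : Portion 𝓕) : p.center ∈ p.carrier :=
  ⟨p.center_mem, mem_closedBall_self p.radius_pos.le⟩

theorem exists_small_subportion_disjoint (h𝓕 : HasNonporousSubportions lam 𝓕)
    {S : Set X} (hS : Porous lam S) (p : Portion 𝓕) {ε : ℝ} (hε : 0 < ε) :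
    ∃ q : Portion 𝓕, q.radius ≤ ε ∧ q.carrier ⊆ p.carrier ∧ Disjoint S q.carrier := by
  obtain ⟨F', hF', U, hU, ⟨x', hx'F, hx'U⟩, hUball, hF'U, hSU⟩ :=
    h𝓕.exists_isOpen_disjoint hS p.set_mem p.center_mem p.radius_pos
  obtain ⟨ρ, hρ, hρU⟩ := nhds_basis_closedBall.mem_iff.1 (hU.mem_nhds hx'U)
  have hsub : closedBall x' (min ρ ε) ⊆ U :=
    (closedBall_subset_closedBall (min_le_left _ _)).trans hρU
  refine ⟨⟨F', x', min ρ ε, hF', hx'F, lt_min hρ hε⟩, min_le_right _ _, ?_,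
    hSU.mono_right (inter_subset_inter_right _ hsub)⟩
  rintro q ⟨hqF, hqB⟩
  exact ⟨hF'U ⟨hqF, hsub hqB⟩, ball_subset_closedBall (hUball (hsub hqB))⟩

theorem nonempty_iInter_carrier [CompleteSpace X] (hcl : ∀ F ∈ 𝓕, IsClosed F)
    (p : ℕ → Portion 𝓕) (hanti : Antitone fun n => (p n).carrier)
    (hrad : Tendsto (fun n => (p n).radius) atTop (𝓝 0)) :
    (⋂ n, (p n).carrier).Nonempty := by
  refine nonempty_iInter_of_nonempty_biInter
    (fun n => (hcl _ (p n).set_mem).inter isClosed_closedBall)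
    (fun n => isBounded_closedBall.subset inter_subset_right)
    (fun N => ⟨(p N).center, mem_iInter₂.2 fun n hn => hanti hn (p N).center_mem_carrier⟩) ?_
  refine squeeze_zero (fun n => diam_nonneg) (fun n => ?_) (by simpa using hrad.const_mul 2)
  exact (diam_mono inter_subset_right isBounded_closedBall).trans
    (diam_closedBall (p n).radius_pos.le)

end Portion

end

theorem stmt_0_general {X : Type*} [MetricSpace X] [CompleteSpace X] (lam : ℝ)
    (𝓕 : Set (Set X))
    (hne : ∀ F ∈ 𝓕, F.Nonempty) (hcl : ∀ F ∈ 𝓕, IsClosed F)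
    (hkey : ∀ F ∈ 𝓕, ∀ x : X, ∀ r > (0 : ℝ), (Metric.ball x r ∩ F).Nonempty →
      ∃ J ∈ 𝓕, (J ∩ Metric.ball x r).Nonempty ∧
        J ∩ Metric.ball x r ⊆ F ∩ Metric.ball x r ∧
        ∀ z ∈ J ∩ Metric.ball x r, ¬ PorousAt lam (F ∩ Metric.ball x r) z) :
    ∀ F ∈ 𝓕, ¬ SigmaPorousFor lam F := by
  rintro F₀ hF₀ ⟨S, hS, rfl⟩
  obtain ⟨x₀, hx₀⟩ := hne _ hF₀
  choose next hnext_rad hnext_sub hnext_disj using fun n (p : Portion 𝓕) =>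
    p.exists_small_subportion_disjoint hkey (hS n) (pow_pos one_half_pos (n + 1))
  let p : ℕ → Portion 𝓕 := fun n =>
    Nat.rec (motive := fun _ => Portion 𝓕) ⟨_, x₀, 1, hF₀, hx₀, one_pos⟩ next n
  have hrad : ∀ n, (p n).radius ≤ (1 / 2 : ℝ) ^ n := by
    rintro (_ | n)
    · simp [p]
    · exact hnext_rad n (p n)
  obtain ⟨x, hx⟩ := Portion.nonempty_iInter_carrier hcl p
    (antitone_nat_of_succ_le fun n => hnext_sub n (p n))
    (squeeze_zero (fun n => (p n).radius_pos.le) hrad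
      (tendsto_pow_atTop_nhds_zero_of_lt_one (by norm_num) (by norm_num)))
  rw [mem_iInter] at hx
  obtain ⟨m, hm⟩ := mem_iUnion.1 (hx 0).1
  exact (hnext_disj m (p m)).ne_of_mem hm (hx (m + 1)) rfl

/-- Zajíček-type lemma: if every portion of each `F ∈ 𝓕` contains a portion of some `J ∈ 𝓕`
at whose points `F ∩ B(x;r)` is non-`lam`-porous, then no member of `𝓕` is `σ`-`lam`-porous. -/
theorem stmt_0 {X : Type*} [MetricSpace X] [CompleteSpace X] (lam : ℝ)
    (hlam0 : 0 < lam) (hlam1 : lam < 1)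
    (𝓕 : Set (Set X)) (h𝓕 : 𝓕.Nonempty)
    (hne : ∀ F ∈ 𝓕, F.Nonempty) (hcl : ∀ F ∈ 𝓕, IsClosed F)
    (hkey : ∀ F ∈ 𝓕, ∀ x : X, ∀ r > (0 : ℝ), (Metric.ball x r ∩ F).Nonempty →
      ∃ J ∈ 𝓕, (J ∩ Metric.ball x r).Nonempty ∧
        J ∩ Metric.ball x r ⊆ F ∩ Metric.ball x r ∧
        ∀ z ∈ J ∩ Metric.ball x r, ¬ PorousAt lam (F ∩ Metric.ball x r) z) :
    ∀ F ∈ 𝓕, ¬ SigmaPorousFor lam F :=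
  stmt_0_general lam 𝓕 hne hcl hkey
end

section
/- Let $p\geq 1$, $\Omega$ a locally compact Hausdorff space with a nonnegative Radon measure $\mu$, and $A\subseteq\Omega$ a Borel set such that $|f|\chi_A\leq\|f\|_p$ almost everywhere for every $f\in L^p(\Omega,\mu)$. Then for every measurable function $g$ on $\Omega$ with $g\chi_A\in L^p(\Omega,\mu)$, the set $\Gamma_g=\{f\in L^p(\Omega,\mu): |f|\geq |g|\chi_A \text{ a.e.}\}$ is not $\sigma$-porous in $L^p(\Omega,\mu)$. -/
open MeasureTheory Metric Set ENNReal

open Filter Topology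

noncomputable section NSPaux

/-- complex sign with `sgnC 0 = 1`. -/
def sgnC (z : ℂ) : ℂ := if z = 0 then 1 else ‖z‖⁻¹ • z

lemma measurable_sgnC : Measurable sgnC := by
  unfold sgnC
  exact Measurable.ite (measurableSet_eq_fun measurable_id measurable_const)
    measurable_const ((measurable_norm.inv).smul measurable_id)

lemma norm_add_smul_sgnC (z : ℂ) {t : ℝ} (ht : 0 ≤ t) : ‖z + t • sgnC z‖ = ‖z‖ + t := by
  rcases eq_or_ne z 0 with rfl | hz
  · simp [sgnC, ht, abs_of_nonneg]
  · have hnz : (0:ℝ) < ‖z‖ := norm_pos_iff.2 hz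
    have : z + t • sgnC z = ((1 : ℝ) + t * ‖z‖⁻¹) • z := by
      simp only [sgnC, if_neg hz, smul_smul, add_smul, one_smul]
    rw [this, norm_smul]
    have hpos : (0:ℝ) ≤ 1 + t * ‖z‖⁻¹ := by positivity
    rw [Real.norm_of_nonneg hpos, add_mul, one_mul, mul_assoc,
      inv_mul_cancel₀ hnz.ne', mul_one, add_comm]

lemma norm_sgnC (z : ℂ) : ‖sgnC z‖ = 1 := by
  rcases eq_or_ne z 0 with rfl | hz
  · simp [sgnC]
  · have hnz : (0:ℝ) < ‖z‖ := norm_pos_iff.2 hz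
    simp [sgnC, if_neg hz, norm_smul, Real.norm_of_nonneg (inv_nonneg.2 hnz.le),
      ]
    exact inv_mul_cancel₀ (by simpa using hnz.ne')

variable {Ω : Type*} [MeasurableSpace Ω] {μ : Measure Ω} {p : ℝ≥0∞}

/-- Lift an `Lp` element to dominate a level `V`, with cost controlled by a dominator `D`. -/
lemma exists_lift [Fact (1 ≤ p)] (f : Lp ℂ p μ) (V : Ω → ℝ) (hV : Measurable V)
    (D : Ω → ℝ) (hD : MemLp D p μ)
    (hdom : ∀ᵐ ω ∂μ, max (V ω - ‖f ω‖) 0 ≤ ‖D ω‖) :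
    ∃ w : Lp ℂ p μ, (∀ᵐ ω ∂μ, V ω ≤ ‖w ω‖ ∧ ‖f ω‖ ≤ ‖w ω‖) ∧
      dist w f ≤ (eLpNorm D p μ).toReal := by
  set corr : Ω → ℂ := fun ω => (max (V ω - ‖f ω‖) 0 : ℝ) • sgnC (f ω) with hcorr
  have hfm : Measurable (f : Ω → ℂ) := (Lp.stronglyMeasurable f).measurable
  have hcm : Measurable corr :=
    ((hV.sub hfm.norm).max measurable_const).smul (measurable_sgnC.comp hfm)
  have hnc : ∀ ω, ‖corr ω‖ = max (V ω - ‖f ω‖) 0 := by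
    intro ω
    rw [hcorr]
    simp only [norm_smul, norm_sgnC, mul_one, Real.norm_of_nonneg (le_max_right _ _)]
  have hle : eLpNorm corr p μ ≤ eLpNorm D p μ := by
    refine eLpNorm_mono_ae ?_
    filter_upwards [hdom] with ω h using by rw [hnc]; exact h
  have hmem : MemLp corr p μ :=
    ⟨hcm.aestronglyMeasurable, lt_of_le_of_lt hle hD.2⟩
  refine ⟨f + hmem.toLp corr, ?_, ?_⟩
  · have h1 : (↑(f + hmem.toLp corr) : Ω → ℂ) =ᵐ[μ] fun ω => f ω + corr ω := by
      filter_upwards [Lp.coeFn_add f (hmem.toLp corr), hmem.coeFn_toLp] with ω h2 h3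
      rw [h2, Pi.add_apply, h3]
    filter_upwards [h1] with ω h2
    have : ‖f ω + corr ω‖ = ‖f ω‖ + max (V ω - ‖f ω‖) 0 :=
      norm_add_smul_sgnC (f ω) (le_max_right _ _)
    rw [h2, this]
    constructor
    · have := le_max_left (V ω - ‖f ω‖) 0
      linarith
    · have := le_max_right (V ω - ‖f ω‖) 0
      linarith
  · have : dist (f + hmem.toLp corr) f = ‖hmem.toLp corr‖ := by
      rw [dist_eq_norm]
      congr 1
      abel
    rw [this, Lp.norm_toLp]
    exact ENNReal.toReal_mono hD.2.ne hle

lemma gamma_small [Fact (1 ≤ p)] (hp_top : p ≠ ⊤) (G : Ω → ℝ) (hGm : Measurable G)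
    (hGnn : ∀ ω, 0 ≤ G ω) (hGmem : MemLp G p μ) {ε t : ℝ} (hε : 0 < ε) (ht : 0 < t) :
    ∃ τ : ℝ, 0 < τ ∧ τ ≤ t ∧
      (eLpNorm (fun ω => if G ω < τ then G ω else 0) p μ).toReal ≤ ε := by
  have hp0 : p ≠ 0 := (lt_of_lt_of_le zero_lt_one (Fact.out : 1 ≤ p)).ne'
  have hq : 0 < p.toReal := ENNReal.toReal_pos hp0 hp_top
  set q := p.toReal with hqdef
  set F : ℕ → Ω → ℝ := fun k ω => if G ω < 1/(k+1) then G ω else 0 with hF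
  -- lintegral tendsto 0
  have hFm : ∀ k, Measurable (F k) := fun k =>
    Measurable.ite (measurableSet_lt hGm measurable_const) hGm measurable_const
  have hbound : ∀ k, ∀ᵐ ω ∂μ, (‖F k ω‖₊ : ℝ≥0∞) ^ q ≤ (‖G ω‖₊ : ℝ≥0∞) ^ q := by
    intro k
    refine ae_of_all _ fun ω => ?_
    gcongr
    simp only [hF]
    split
    · exact le_rfl
    · simp
  have hGint : (∫⁻ ω, (‖G ω‖₊ : ℝ≥0∞) ^ q ∂μ) < ⊤ :=
    lintegral_rpow_enorm_lt_top_of_eLpNorm_lt_top hp0 hp_top hGmem.2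
  have hpt : ∀ᵐ ω ∂μ, Tendsto (fun k => (‖F k ω‖₊ : ℝ≥0∞) ^ q) atTop (𝓝 0) := by
    refine ae_of_all _ fun ω => ?_
    have : ∀ᶠ k in atTop, (‖F k ω‖₊ : ℝ≥0∞) ^ q = 0 := by
      rcases eq_or_lt_of_le (hGnn ω) with h0 | hpos
      · refine Eventually.of_forall fun k => ?_
        simp only [hF, ← h0]
        split <;> simp [ENNReal.zero_rpow_of_pos hq]
      · obtain ⟨k0, hk0⟩ := exists_nat_gt (1 / G ω)
        refine eventually_atTop.2 ⟨k0, fun k hk => ?_⟩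
        have hlt : 1/((k:ℝ)+1) < G ω := by
          rw [div_lt_iff₀ (by positivity)]
          rw [div_lt_iff₀ hpos] at hk0
          have hkk : (k0:ℝ) ≤ (k:ℝ)+1 := by exact_mod_cast Nat.le_succ_of_le hk
          nlinarith [hGnn ω]
        simp only [hF, not_lt.2 hlt.le, if_neg (not_lt.2 hlt.le)]
        simp [ENNReal.zero_rpow_of_pos hq]

    exact Tendsto.congr' (this.mono fun k hk => hk.symm) tendsto_const_nhds
  have hlint : Tendsto (fun k => ∫⁻ ω, (‖F k ω‖₊ : ℝ≥0∞) ^ q ∂μ) atTop (𝓝 0) := by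
    have := tendsto_lintegral_of_dominated_convergence (fun ω => (‖G ω‖₊ : ℝ≥0∞) ^ q)
      (fun k => ((hFm k).nnnorm.coe_nnreal_ennreal.pow_const q)) hbound hGint.ne hpt
    simpa using this
  have help : Tendsto (fun k => eLpNorm (F k) p μ) atTop (𝓝 0) := by
    have hcont := (ENNReal.continuous_rpow_const (y := 1/q)).tendsto 0
    have h0 : (0 : ℝ≥0∞) ^ (1/q) = 0 := ENNReal.zero_rpow_of_pos (by positivity)
    have := hcont.comp hlint
    rw [h0] at this
    refine Tendsto.congr (fun k => ?_) this
    rw [Function.comp_apply, eLpNorm_eq_lintegral_rpow_enorm_toReal hp0 hp_top]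
    rfl
  have hev : ∀ᶠ k in atTop, eLpNorm (F k) p μ < ENNReal.ofReal ε :=
    (tendsto_order.1 help).2 _ (ENNReal.ofReal_pos.2 hε)
  obtain ⟨k, hk⟩ := hev.exists
  refine ⟨min t (1/(k+1)), by positivity, min_le_left _ _, ?_⟩
  have hmono : eLpNorm (fun ω => if G ω < min t (1/(k+1)) then G ω else 0) p μ
      ≤ eLpNorm (F k) p μ := by
    refine eLpNorm_mono_ae (ae_of_all _ fun ω => ?_)
    simp only [hF, Real.norm_eq_abs]
    rcases lt_or_ge (G ω) (min t (1/((k:ℝ)+1))) with h | h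
    · rw [if_pos h, if_pos (lt_of_lt_of_le h (min_le_right _ _))]
    · rw [if_neg (not_lt.2 h), abs_zero]
      split <;> simp [abs_nonneg]
  refine ENNReal.toReal_le_of_le_ofReal hε.le (hmono.trans hk.le)

lemma meas_head_lt_top [Fact (1 ≤ p)] (hp_top : p ≠ ⊤) (G : Ω → ℝ)
    (hGnn : ∀ ω, 0 ≤ G ω) (hGmem : MemLp G p μ) {τ : ℝ} (hτ : 0 < τ) :
    μ {ω | τ ≤ G ω} < ⊤ := by
  have hp0 : p ≠ 0 := (lt_of_lt_of_le zero_lt_one (Fact.out : 1 ≤ p)).ne'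
  have hset : {ω | τ ≤ G ω} ⊆ {ω | ENNReal.ofReal τ ≤ (‖G ω‖₊ : ℝ≥0∞)} := by
    intro ω h
    simp only [mem_setOf_eq] at h ⊢
    show _ ≤ ‖G ω‖ₑ
    rw [← ofReal_norm, Real.norm_of_nonneg (hGnn ω)]
    exact ENNReal.ofReal_le_ofReal h
  refine lt_of_le_of_lt (measure_mono hset) ?_
  refine lt_of_le_of_lt
    (meas_ge_le_mul_pow_eLpNorm_enorm μ hp0 hp_top hGmem.1 (ε := ENNReal.ofReal τ)
      ((ENNReal.ofReal_pos.2 hτ).ne') (fun h => absurd h ENNReal.ofReal_ne_top)) ?_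
  have h1 : (ENNReal.ofReal τ)⁻¹ ^ p.toReal ≠ ⊤ := by
    refine ENNReal.rpow_ne_top_of_nonneg ENNReal.toReal_nonneg ?_
    simp [ENNReal.inv_ne_top, hτ]
  have h2 : eLpNorm G p μ ^ p.toReal ≠ ⊤ :=
    ENNReal.rpow_ne_top_of_nonneg ENNReal.toReal_nonneg hGmem.2.ne
  exact ENNReal.mul_lt_top h1.lt_top h2.lt_top

set_option maxHeartbeats 2000000 in
lemma nsp_step [Fact (1 ≤ p)] (hp_top : p ≠ ⊤)
    (G : Ω → ℝ) (hGm : Measurable G) (hGnn : ∀ ω, 0 ≤ G ω) (hGmem : MemLp G p μ)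
    (hptw : ∀ x y : Lp ℂ p μ, ∀ᵐ ω ∂μ, 0 < G ω → ‖x ω - y ω‖ ≤ dist x y)
    (S : Set (Lp ℂ p μ)) (lam : ℝ) (hl0 : 0 < lam) (hl1 : lam < 1) (hS : Porous lam S)
    (z : Lp ℂ p μ) (r t C : ℝ) (hr : 0 < r) (ht : 0 < t) (hC : 1 ≤ C)
    (Λ : Ω → ℝ) (hΛm : Measurable Λ)
    (hGΛ : ∀ᵐ ω ∂μ, G ω ≤ Λ ω) (hΛz : ∀ᵐ ω ∂μ, Λ ω ≤ ‖z ω‖)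
    (htail : ∀ᵐ ω ∂μ, G ω < t → Λ ω ≤ C * G ω) :
    ∃ (z' : Lp ℂ p μ) (r' t' C' : ℝ) (Λ' : Ω → ℝ),
      0 < r' ∧ r' ≤ r/4 ∧ dist z' z + r' ≤ r ∧ 0 < t' ∧ 1 ≤ C' ∧ Measurable Λ' ∧
      (∀ᵐ ω ∂μ, G ω ≤ Λ' ω) ∧ (∀ᵐ ω ∂μ, Λ' ω ≤ ‖z' ω‖) ∧
      (∀ᵐ ω ∂μ, G ω < t' → Λ' ω ≤ C' * G ω) ∧ (∀ᵐ ω ∂μ, Λ ω ≤ Λ' ω) ∧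
      (∀ f : Lp ℂ p μ, dist f z' ≤ r' → (∀ᵐ ω ∂μ, Λ' ω ≤ ‖f ω‖) → f ∉ S) := by
  have hp0 : p ≠ 0 := (lt_of_lt_of_le zero_lt_one (Fact.out : 1 ≤ p)).ne'
  set Θ : ℝ := 8 / lam with hΘdef
  have hΘ : 0 < Θ := by positivity
  set K : ℝ := C * (1 + Θ) with hKdef
  have hK1 : 1 ≤ K := by nlinarith
  have hKpos : 0 < K := lt_of_lt_of_le zero_lt_one hK1
  -- choose the tail threshold τ
  obtain ⟨τ, hτ0, hτt, hγ⟩ := gamma_small (μ := μ) hp_top G hGm hGnn hGmem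
    (ε := r / (64 * K)) (by positivity) ht
  set γf : Ω → ℝ := fun ω => if G ω < τ then G ω else 0 with hγf
  have hγfm : Measurable γf :=
    Measurable.ite (measurableSet_lt hGm measurable_const) hGm measurable_const
  have hγfmem : MemLp γf p μ := by
    refine hGmem.of_le hγfm.aestronglyMeasurable (ae_of_all _ fun ω => ?_)
    simp only [hγf, Real.norm_eq_abs]
    split
    · exact le_rfl
    · simp [abs_nonneg]
  -- head set and its measure
  set Hs : Set Ω := {ω | τ ≤ G ω} with hHsdef
  have hHsm : MeasurableSet Hs := measurableSet_le measurable_const hGm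
  have hμH : μ Hs < ⊤ := meas_head_lt_top hp_top G hGnn hGmem hτ0
  set ν : ℝ := ((μ Hs) ^ (1 / p.toReal)).toReal with hνdef
  have hν0 : 0 ≤ ν := ENNReal.toReal_nonneg
  set ρ : ℝ := min (r/64) (r/(64*(ν+1))) with hρdef
  have hρ0 : 0 < ρ := lt_min (by positivity) (by positivity)
  have hρr : ρ ≤ r/64 := min_le_left _ _
  -- the two templates
  set Tlow : Ω → ℝ := fun ω => if τ ≤ G ω then Λ ω else C * G ω with hTdef
  set Phigh : Ω → ℝ := fun ω => if τ ≤ G ω then Λ ω + 2*ρ else K * G ω with hPdef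
  have hTm : Measurable Tlow :=
    Measurable.ite hHsm hΛm (hGm.const_mul C)
  have hPm : Measurable Phigh :=
    Measurable.ite hHsm (hΛm.add_const _) (hGm.const_mul K)
  have hTG : ∀ᵐ ω ∂μ, G ω ≤ Tlow ω := by
    filter_upwards [hGΛ] with ω h1
    simp only [hTdef]
    split
    · exact h1
    · nlinarith [hGnn ω]
  have hTΛ : ∀ᵐ ω ∂μ, Λ ω ≤ Tlow ω := by
    filter_upwards [htail] with ω h1
    simp only [hTdef]
    split
    · exact le_rfl
    · exact h1 (lt_of_lt_of_le (lt_of_not_ge (by assumption)) hτt)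
  have hPΛ : ∀ᵐ ω ∂μ, Λ ω ≤ Phigh ω := by
    filter_upwards [htail] with ω h1
    simp only [hPdef]
    split
    · linarith [hρ0]
    · refine le_trans (h1 (lt_of_lt_of_le (lt_of_not_ge (by assumption)) hτt)) ?_
      rw [hKdef]
      nlinarith [mul_nonneg (mul_nonneg (le_trans zero_le_one hC) hΘ.le) (hGnn ω)]
  have hPG : ∀ᵐ ω ∂μ, G ω ≤ Phigh ω := by
    filter_upwards [hGΛ] with ω h1
    simp only [hPdef]
    split
    · linarith [hρ0]
    · rw [hKdef]
      nlinarith [hGnn ω, hΘ, hC]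
  -- the dichotomy
  by_cases hGood : ∃ (w : Lp ℂ p μ) (ρ' : ℝ) (V : Ω → ℝ), 0 < ρ' ∧ dist w z + ρ' ≤ r/2 ∧
      (V = Tlow ∨ V = Phigh) ∧ (∀ᵐ ω ∂μ, V ω ≤ ‖w ω‖) ∧
      (∀ f : Lp ℂ p μ, dist f w ≤ ρ' → (∀ᵐ ω ∂μ, V ω ≤ ‖f ω‖) → f ∉ S)
  · obtain ⟨w, ρ', V, hρ', hball, hVt, hwlev, hfree⟩ := hGood
    refine ⟨w, min ρ' (r/4), τ, K, V, lt_min hρ' (by positivity), min_le_right _ _, ?_,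
      hτ0, hK1, ?_, ?_, hwlev, ?_, ?_, ?_⟩
    · have : dist w z ≤ r/2 := by linarith [hρ']
      have h2 : min ρ' (r/4) ≤ r/4 := min_le_right _ _
      linarith
    · rcases hVt with rfl | rfl
      · exact hTm
      · exact hPm
    · rcases hVt with rfl | rfl
      · exact hTG
      · exact hPG
    · rcases hVt with rfl | rfl
      · filter_upwards [] with ω hlt
        simp only [hTdef, if_neg (not_le.2 hlt)]
        rw [hKdef]
        nlinarith [mul_nonneg (mul_nonneg (le_trans zero_le_one hC) hΘ.le) (hGnn ω)]
      · filter_upwards [] with ω hlt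
        simp only [hPdef, if_neg (not_le.2 hlt)]
        exact le_rfl
    · rcases hVt with rfl | rfl
      · exact hTΛ
      · exact hPΛ
    · exact fun f hd hl => hfree f (le_trans hd (min_le_left _ _)) hl
  · exfalso
    -- every admissible chunk meets S
    have hMeets : ∀ (w : Lp ℂ p μ) (ρ' : ℝ) (V : Ω → ℝ), 0 < ρ' → dist w z + ρ' ≤ r/2 →
        (V = Tlow ∨ V = Phigh) → (∀ᵐ ω ∂μ, V ω ≤ ‖w ω‖) →
        ∃ f : Lp ℂ p μ, dist f w ≤ ρ' ∧ (∀ᵐ ω ∂μ, V ω ≤ ‖f ω‖) ∧ f ∈ S := by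
      intro w ρ' V h1 h2 h3 h4
      by_contra hno
      push_neg at hno
      exact hGood ⟨w, ρ', V, h1, h2, h3, h4, fun f hd hl hin => (hno f hd hl) hin⟩
    -- build the probe center w*
    set D1 : Ω → ℝ := Hs.indicator (fun _ => 2*ρ) with hD1
    set D2 : Ω → ℝ := fun ω => K * γf ω with hD2
    have hD1mem : MemLp D1 p μ := memLp_indicator_const p hHsm _ (Or.inr hμH.ne)
    have hD2mem : MemLp D2 p μ := hγfmem.const_mul K
    have hDmem : MemLp (fun ω => D1 ω + D2 ω) p μ := hD1mem.add hD2mem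
    have hdomP : ∀ᵐ ω ∂μ, max (Phigh ω - ‖z ω‖) 0 ≤ ‖D1 ω + D2 ω‖ := by
      filter_upwards [hΛz] with ω h1
      by_cases hh : τ ≤ G ω
      · have hD1v : D1 ω = 2*ρ := Set.indicator_of_mem (show ω ∈ Hs from hh) _
        have hD2v : D2 ω = 0 := by
          simp only [hD2, hγf, if_neg (not_lt.2 hh), mul_zero]
        rw [hD1v, hD2v, add_zero, Real.norm_of_nonneg (by linarith [hρ0])]
        simp only [hPdef, if_pos hh]
        have : Λ ω + 2*ρ - ‖z ω‖ ≤ 2*ρ := by linarith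
        exact max_le this (by linarith [hρ0])
      · have hD1v : D1 ω = 0 := Set.indicator_of_notMem (show ω ∉ Hs from hh) _
        have hD2v : D2 ω = K * G ω := by
          simp only [hD2, hγf, if_pos (not_le.1 hh)]
        rw [hD1v, hD2v, zero_add, Real.norm_of_nonneg (mul_nonneg hKpos.le (hGnn ω))]
        simp only [hPdef, if_neg hh]
        have hz0 : (0:ℝ) ≤ ‖z ω‖ := norm_nonneg _
        exact max_le (by linarith) (by nlinarith [hGnn ω])
    obtain ⟨wst, hwstlev0, hwstdist⟩ := exists_lift z Phigh hPm _ hDmem hdomP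
    have hwstlev : ∀ᵐ ω ∂μ, Phigh ω ≤ ‖wst ω‖ := hwstlev0.mono fun ω h => h.1
    -- dist wst z ≤ r/16
    have hD1n : eLpNorm D1 p μ = ENNReal.ofReal (2*ρ) * (μ Hs) ^ (1 / p.toReal) := by
      rw [hD1, eLpNorm_indicator_const hHsm hp0 hp_top]
      congr 1
      rw [← ofReal_norm, Real.norm_of_nonneg (by linarith [hρ0])]
    have hD1top : eLpNorm D1 p μ ≠ ⊤ := by
      rw [hD1n]
      exact (ENNReal.mul_lt_top ENNReal.ofReal_lt_top
        (ENNReal.rpow_lt_top_of_nonneg (by positivity) hμH.ne)).ne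
    have hD2n : eLpNorm D2 p μ = ENNReal.ofReal K * eLpNorm γf p μ := by
      have hD2eq : D2 = (K : ℝ) • γf := by
        ext ω; simp [hD2, smul_eq_mul]
      rw [hD2eq, eLpNorm_const_smul]
      congr 1
      rw [← ofReal_norm, Real.norm_of_nonneg hKpos.le]
    have hγftop : eLpNorm γf p μ ≠ ⊤ := hγfmem.2.ne
    have hD2top : eLpNorm D2 p μ ≠ ⊤ := by
      rw [hD2n]
      exact (ENNReal.mul_lt_top ENNReal.ofReal_lt_top hγftop.lt_top).ne
    have hwst16 : dist wst z ≤ r/16 := by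
      refine le_trans hwstdist ?_
      have hadd : eLpNorm (fun ω => D1 ω + D2 ω) p μ ≤ eLpNorm D1 p μ + eLpNorm D2 p μ :=
        eLpNorm_add_le hD1mem.1 hD2mem.1 (Fact.out : 1 ≤ p)
      have h1 : (eLpNorm D1 p μ).toReal ≤ 2 * ρ * ν := by
        rw [hD1n, ENNReal.toReal_mul, ENNReal.toReal_ofReal (by positivity)]
      have h2 : (eLpNorm D2 p μ).toReal ≤ K * (r/(64*K)) := by
        rw [hD2n, ENNReal.toReal_mul, ENNReal.toReal_ofReal hKpos.le]
        exact mul_le_mul_of_nonneg_left hγ hKpos.le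
      have h3 : (eLpNorm (fun ω => D1 ω + D2 ω) p μ).toReal ≤
          (eLpNorm D1 p μ).toReal + (eLpNorm D2 p μ).toReal := by
        refine le_trans (ENNReal.toReal_mono ?_ hadd) ENNReal.toReal_add_le
        exact (ENNReal.add_lt_top.2 ⟨hD1top.lt_top, hD2top.lt_top⟩).ne
      have h4 : 2 * ρ * ν ≤ r/32 := by
        have h5 : ρ ≤ r/(64*(ν+1)) := min_le_right _ _
        have h6 : ρ * (ν+1) ≤ r/64 := by
          rw [← le_div_iff₀ (by positivity)]
          calc ρ ≤ r/(64*(ν+1)) := h5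
          _ = r/64/(ν+1) := by rw [div_div]
        nlinarith [hρ0]
      have h6 : K * (r/(64*K)) = r/64 := by
        field_simp
      linarith
    -- get an S point in the probe chunk
    obtain ⟨x, hxd, hxlev, hxS⟩ := hMeets wst ρ Phigh hρ0 (by linarith) (Or.inr rfl) hwstlev
    -- porosity at x
    obtain ⟨y, hyball, hyne, hole⟩ := hS x hxS ρ hρ0
    set d : ℝ := dist x y with hddef
    have hd0 : 0 < d := dist_pos.2 (fun h => hyne h.symm)
    have hdρ : d < ρ := by
      have := mem_ball.1 hyball
      rw [hddef, dist_comm]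
      exact this
    -- lift y to the low template
    set D' : Ω → ℝ := fun ω => ‖((lam/8) • (x - y) : Lp ℂ p μ) ω‖ with hD'def
    have hD'mem : MemLp D' p μ := (Lp.memLp _).norm
    have hdomT : ∀ᵐ ω ∂μ, max (Tlow ω - ‖y ω‖) 0 ≤ ‖D' ω‖ := by
      have hcoe : ∀ᵐ ω ∂μ, ((lam/8) • (x - y) : Lp ℂ p μ) ω = (lam/8) • (x ω - y ω) := by
        filter_upwards [Lp.coeFn_smul (lam/8) (x - y), Lp.coeFn_sub x y] with ω h1 h2
        rw [h1, Pi.smul_apply, h2, Pi.sub_apply]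
      filter_upwards [hxlev, hptw x y, hcoe] with ω hx1 hu1 hc1
      have hD'v : ‖D' ω‖ = (lam/8) * ‖x ω - y ω‖ := by
        rw [hD'def]
        rw [norm_norm, hc1, norm_smul, Real.norm_of_nonneg (by positivity : (0:ℝ) ≤ lam/8)]
      have hyn : ‖x ω‖ - ‖x ω - y ω‖ ≤ ‖y ω‖ := by
        have h2 := norm_sub_norm_le (x ω) (y ω)
        linarith
      rw [hD'v]
      set u : ℝ := ‖x ω - y ω‖ with hudef
      have hu0 : 0 ≤ u := norm_nonneg _
      have hrhs0 : 0 ≤ (lam/8) * u := by positivity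
      by_cases hh : τ ≤ G ω
      · have hG0 : 0 < G ω := lt_of_lt_of_le hτ0 hh
        have hud : u ≤ dist x y := hu1 hG0
        have hx2 : Λ ω + 2*ρ ≤ ‖x ω‖ := by
          have := hx1
          simp only [hPdef, if_pos hh] at this
          exact this
        have hT : Tlow ω = Λ ω := by simp only [hTdef, if_pos hh]
        rw [hT]
        have hneg : Λ ω - ‖y ω‖ ≤ 0 := by
          have : d < ρ := hdρ
          simp only [← hddef] at hud
          linarith
        exact max_le (le_trans hneg hrhs0) hrhs0
      · have hG : G ω < τ := not_le.1 hh
        have hx2 : K * G ω ≤ ‖x ω‖ := by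
          have := hx1
          simp only [hPdef, if_neg hh] at this
          exact this
        have hT : Tlow ω = C * G ω := by simp only [hTdef, if_neg hh]
        rw [hT]
        have hKG : K * G ω = C * G ω + C * Θ * G ω := by rw [hKdef]; ring
        by_cases hcase : u ≤ C * Θ * G ω
        · have hneg : C * G ω - ‖y ω‖ ≤ 0 := by linarith
          exact max_le (le_trans hneg hrhs0) hrhs0
        · have hlt : C * Θ * G ω < u := not_le.1 hcase
          have heq : (lam/8) * (C * Θ * G ω) = C * G ω := by
            rw [hΘdef]
            field_simp
          have h3 : C * G ω < (lam/8) * u := by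
            rw [← heq]
            exact mul_lt_mul_of_pos_left hlt (by positivity)
          have hb0 : (0:ℝ) ≤ ‖y ω‖ := norm_nonneg _
          exact max_le (by linarith) hrhs0
    obtain ⟨w', hw'lev0, hw'dist⟩ := exists_lift y Tlow hTm _ hD'mem hdomT
    have hw'lev : ∀ᵐ ω ∂μ, Tlow ω ≤ ‖w' ω‖ := hw'lev0.mono fun ω h => h.1
    have hD'norm : (eLpNorm D' p μ).toReal = (lam/8) * d := by
      have h1 : eLpNorm D' p μ = eLpNorm (((lam/8) • (x - y) : Lp ℂ p μ) : Ω → ℂ) p μ := by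
        rw [hD'def]
        exact eLpNorm_norm _
      rw [h1, ← Lp.norm_def, norm_smul, Real.norm_of_nonneg (by positivity : (0:ℝ) ≤ lam/8),
        ← dist_eq_norm, hddef]
    have hw'd : dist w' y ≤ (lam/8) * d := by
      rw [← hD'norm]
      exact hw'dist
    have hlamd : lam * d ≤ d := mul_le_of_le_one_left hd0.le hl1.le
    have hwz : dist w' z + (lam/8) * d ≤ r/2 := by
      have h1 : dist w' z ≤ dist w' y + dist y x + dist x wst + dist wst z := by
        have t1 := dist_triangle w' y z
        have t2 := dist_triangle y x z
        have t3 := dist_triangle x wst z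
        linarith
      have h2 : dist y x = d := by rw [hddef, dist_comm]
      have h3 : dist x wst ≤ ρ := hxd
      rw [h2] at h1
      have h5 : r/64 ≤ r := by linarith
      linarith [hwst16, hdρ, hρr, hw'd]
    obtain ⟨x', hx'd, hx'lev, hx'S⟩ := hMeets w' ((lam/8)*d) Tlow (by positivity) hwz
      (Or.inl rfl) hw'lev
    have hx'y : dist x' y < lam * dist x y := by
      have h1 := dist_triangle x' w' y
      have : dist x' y ≤ (lam/8)*d + (lam/8)*d := by linarith [hx'd, hw'd]
      rw [← hddef]
      nlinarith [hd0, hl0]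
    exact (eq_empty_iff_forall_notMem.1 hole x') ⟨mem_ball.2 hx'y, hx'S⟩

structure NStage {Ω : Type*} [MeasurableSpace Ω] (μ : Measure Ω) (p : ℝ≥0∞) (G : Ω → ℝ) where
  z : Lp ℂ p μ
  r : ℝ
  t : ℝ
  Cc : ℝ
  lev : Ω → ℝ
  hr : 0 < r
  ht : 0 < t
  hC : 1 ≤ Cc
  hlm : Measurable lev
  hGl : ∀ᵐ ω ∂μ, G ω ≤ lev ω
  hlz : ∀ᵐ ω ∂μ, lev ω ≤ ‖z ω‖
  htail : ∀ᵐ ω ∂μ, G ω < t → lev ω ≤ Cc * G ω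

end NSPaux

theorem nsp_main {Ω : Type*} [MeasurableSpace Ω] (μ : Measure Ω)
    (p : ℝ≥0∞) [Fact (1 ≤ p)] (hp : p ≠ ⊤)
    (A : Set Ω) (hA : MeasurableSet A)
    (hcond : ∀ f : Lp ℂ p μ, ∀ᵐ x ∂μ, x ∈ A → ‖f x‖ ≤ ‖f‖)
    (g : Ω → ℂ) (hg : Measurable g) (hgA : MemLp (A.indicator g) p μ) :
    ¬ SigmaPorous {f : Lp ℂ p μ | ∀ᵐ x ∂μ, x ∈ A → ‖g x‖ ≤ ‖f x‖} := by
  rintro ⟨Sseq, hSs, hUnion⟩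
  choose lam hlam0 hlam1 hlamP using hSs
  set G : Ω → ℝ := fun ω => ‖A.indicator g ω‖ with hGdef
  have hGm : Measurable G := (hg.indicator hA).norm
  have hGnn : ∀ ω, 0 ≤ G ω := fun ω => norm_nonneg _
  have hGmem : MemLp G p μ := hgA.norm
  have hGA : ∀ ω, 0 < G ω → ω ∈ A := by
    intro ω h
    by_contra hω
    have : G ω = 0 := by
      simp only [hGdef, Set.indicator_of_notMem hω, norm_zero]
    linarith
  have hptw : ∀ x y : Lp ℂ p μ, ∀ᵐ ω ∂μ, 0 < G ω → ‖x ω - y ω‖ ≤ dist x y := by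
    intro x y
    filter_upwards [hcond (x - y), Lp.coeFn_sub x y] with ω h1 h2 hpos
    have h3 := h1 (hGA ω hpos)
    rw [h2, Pi.sub_apply] at h3
    rw [dist_eq_norm]
    exact h3
  -- the step, packaged
  have hstep : ∀ (n : ℕ) (st : NStage μ p G), ∃ st' : NStage μ p G,
      st'.r ≤ st.r/4 ∧ dist st'.z st.z + st'.r ≤ st.r ∧
      (∀ᵐ ω ∂μ, st.lev ω ≤ st'.lev ω) ∧
      (∀ f : Lp ℂ p μ, dist f st'.z ≤ st'.r → (∀ᵐ ω ∂μ, st'.lev ω ≤ ‖f ω‖) → f ∉ Sseq n) := by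
    intro n st
    obtain ⟨z', r', t', C', Λ', h1, h2, h3, h4, h5, h6, h7, h8, h9, h10, h11⟩ :=
      nsp_step hp G hGm hGnn hGmem hptw (Sseq n) (lam n) (hlam0 n) (hlam1 n) (hlamP n)
        st.z st.r st.t st.Cc st.hr st.ht st.hC st.lev st.hlm st.hGl st.hlz st.htail
    exact ⟨⟨z', r', t', C', Λ', h1, h4, h5, h6, h7, h8, h9⟩, h2, h3, h10, h11⟩
  choose F hF1 hF2 hF3 hF4 using hstep
  -- initial stage
  have hz0lev : ∀ᵐ ω ∂μ, G ω ≤ ‖(hgA.toLp (A.indicator g)) ω‖ := by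
    filter_upwards [hgA.coeFn_toLp] with ω h
    rw [h]
  let st0 : NStage μ p G :=
    ⟨hgA.toLp _, 1, 1, 1, G, one_pos, one_pos, le_rfl, hGm,
      ae_of_all _ (fun ω => le_rfl), hz0lev,
      ae_of_all _ (fun ω _ => by rw [one_mul])⟩
  set seq : ℕ → NStage μ p G := fun n => Nat.rec st0 (fun n st => F n st) n with hseq
  have hsucc : ∀ n, seq (n+1) = F n (seq n) := fun n => rfl
  have hr0 : (seq 0).r = 1 := rfl
  have hlev0 : (seq 0).lev = G := rfl
  -- radius decay and nesting
  have hrpos : ∀ n, 0 < (seq n).r := fun n => (seq n).hr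
  have hrdec : ∀ n, (seq (n+1)).r ≤ (seq n).r / 4 := fun n => by
    rw [hsucc]; exact hF1 n (seq n)
  have hrpow : ∀ n, (seq n).r ≤ (1/4)^n := by
    intro n
    induction n with
    | zero => rw [hr0]; norm_num
    | succ n ih =>
      have := hrdec n
      have h2 : (1/4:ℝ)^(n+1) = (1/4)^n/4 := by ring
      rw [h2]
      linarith
  have hrmono : ∀ n m, n ≤ m → (seq m).r ≤ (seq n).r := by
    intro n m h
    induction m with
    | zero => simp_all
    | succ m ih =>
      rcases Nat.lt_or_ge n (m+1) with h2 | h2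
      · have := ih (Nat.lt_succ_iff.1 h2)
        have h3 := hrdec m
        have := hrpos m
        linarith
      · have : n = m+1 := le_antisymm h h2
        rw [this]
  have hnest : ∀ n m, n ≤ m → dist (seq m).z (seq n).z + (seq m).r ≤ (seq n).r := by
    intro n m h
    induction m with
    | zero =>
      have : n = 0 := Nat.le_zero.1 h
      subst this
      simp [hrpos 0]
    | succ m ih =>
      rcases Nat.lt_or_ge n (m+1) with h2 | h2
      · have ihm := ih (Nat.lt_succ_iff.1 h2)
        have h3 := hF2 m (seq m)
        rw [← hsucc] at h3
        have h4 := dist_triangle (seq (m+1)).z (seq m).z (seq n).z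
        linarith
      · have : n = m+1 := le_antisymm h h2
        subst this
        simp [hrpos (m+1)]
  -- Cauchy and limit
  have hcauchy : CauchySeq (fun n => (seq n).z) := by
    refine cauchySeq_of_le_tendsto_0' (fun n => (seq n).r) ?_ ?_
    · intro n m hnm
      have := hnest n m hnm
      have := hrpos m
      rw [dist_comm]
      linarith
    · refine squeeze_zero (fun n => (hrpos n).le) hrpow ?_
      exact tendsto_pow_atTop_nhds_zero_of_lt_one (by norm_num) (by norm_num)
  obtain ⟨xs, hxs⟩ := cauchySeq_tendsto_of_complete hcauchy
  have hxdist : ∀ n, dist xs (seq n).z ≤ (seq n).r := by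
    intro n
    have h1 : Tendsto (fun m => dist (seq m).z (seq n).z) atTop (𝓝 (dist xs (seq n).z)) :=
      (hxs.dist tendsto_const_nhds)
    refine le_of_tendsto h1 ?_
    filter_upwards [eventually_atTop.2 ⟨n, fun m hm => hm⟩] with m hm
    have := hnest n m hm
    have := hrpos m
    linarith
  -- monotone levels
  have hlmono : ∀ n m, n ≤ m → ∀ᵐ ω ∂μ, (seq n).lev ω ≤ (seq m).lev ω := by
    intro n m h
    induction m with
    | zero =>
      have : n = 0 := Nat.le_zero.1 h
      subst this
      exact ae_of_all _ fun ω => le_rfl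
    | succ m ih =>
      rcases Nat.lt_or_ge n (m+1) with h2 | h2
      · have ihm := ih (Nat.lt_succ_iff.1 h2)
        have h3 := hF3 m (seq m)
        rw [← hsucc] at h3
        filter_upwards [ihm, h3] with ω hω1 hω2 using le_trans hω1 hω2
      · have : n = m+1 := le_antisymm h h2
        subst this
        exact ae_of_all _ fun ω => le_rfl
  -- a.e. convergent subsequence
  have hp0 : p ≠ 0 := (lt_of_lt_of_le zero_lt_one (Fact.out : 1 ≤ p)).ne'
  have htend0 : Tendsto (fun m => eLpNorm ((fun ω => (seq m).z ω) - (fun ω => xs ω)) p μ)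
      atTop (𝓝 0) := by
    have heq : ∀ m, eLpNorm ((fun ω => (seq m).z ω) - (fun ω => xs ω)) p μ
        = (‖(seq m).z - xs‖₊ : ℝ≥0∞) := by
      intro m
      rw [show ((‖(seq m).z - xs‖₊ : ℝ≥0∞)) = ‖(seq m).z - xs‖ₑ from rfl, Lp.enorm_def]
      refine eLpNorm_congr_ae ?_
      filter_upwards [Lp.coeFn_sub (seq m).z xs] with ω h
      rw [h]
    have h2 : Tendsto (fun m => ((seq m).z - xs : Lp ℂ p μ)) atTop (𝓝 0) := by
      rw [← sub_self xs]
      exact hxs.sub tendsto_const_nhds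
    have h3 : Tendsto (fun m => (‖(seq m).z - xs‖₊ : ℝ≥0∞)) atTop (𝓝 0) := by
      rw [← ENNReal.coe_zero]
      refine ENNReal.tendsto_coe.2 ?_
      have := h2.nnnorm
      simpa using this
    exact Tendsto.congr (fun m => (heq m).symm) h3
  have hTIM := tendstoInMeasure_of_tendsto_eLpNorm (μ := μ) hp0
    (fun m => Lp.aestronglyMeasurable ((seq m).z)) (Lp.aestronglyMeasurable xs) htend0
  obtain ⟨ns, hnsmono, hae⟩ := hTIM.exists_seq_tendsto_ae
  -- a.e. level for the limit
  have hxlev : ∀ n, ∀ᵐ ω ∂μ, (seq n).lev ω ≤ ‖xs ω‖ := by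
    intro n
    have hseqlev : ∀ᵐ ω ∂μ, ∀ i, n ≤ ns i → (seq n).lev ω ≤ ‖(seq (ns i)).z ω‖ := by
      rw [ae_all_iff]
      intro i
      by_cases hi : n ≤ ns i
      · filter_upwards [hlmono n (ns i) hi, (seq (ns i)).hlz] with ω h1 h2 _
        exact le_trans h1 h2
      · exact ae_of_all _ fun ω h => absurd h hi
    filter_upwards [hae, hseqlev] with ω h1 h2
    have h3 : Tendsto (fun i => ‖(seq (ns i)).z ω‖) atTop (𝓝 ‖xs ω‖) := h1.norm
    refine ge_of_tendsto h3 ?_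
    filter_upwards [eventually_atTop.2 ⟨n, fun i hi => hi⟩] with i hi
    exact h2 i (le_trans hi (hnsmono.le_apply))
  -- the limit avoids every `Sseq n`
  have havoid : ∀ n, xs ∉ Sseq n := by
    intro n
    have h4 := hF4 n (seq n) xs
    rw [← hsucc] at h4
    exact h4 (hxdist (n+1)) (hxlev (n+1))
  -- but the limit is in the union
  have hmem : xs ∈ {f : Lp ℂ p μ | ∀ᵐ x ∂μ, x ∈ A → ‖g x‖ ≤ ‖f x‖} := by
    have h0 := hxlev 0
    rw [hlev0] at h0
    filter_upwards [h0] with ω h1 hωA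
    have h2 : G ω = ‖g ω‖ := by
      simp only [hGdef, Set.indicator_of_mem hωA]
    rw [← h2]
    exact h1
  rw [hUnion] at hmem
  obtain ⟨_, ⟨n, rfl⟩, hn⟩ := hmem
  exact havoid n hn


/-- For a Radon measure on a locally compact Hausdorff space and a Borel set `A` with
`|f| χ_A ≤ ‖f‖_p` a.e. for all `f ∈ L^p`, the set `Γ_g = {f : |f| ≥ |g| χ_A a.e.}`
is not `σ`-porous, for any measurable `g` with `g χ_A ∈ L^p`. -/
theorem stmt_1 {Ω : Type*} [TopologicalSpace Ω] [T2Space Ω] [LocallyCompactSpace Ω]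
    [MeasurableSpace Ω] [BorelSpace Ω] (μ : Measure Ω) [μ.Regular]
    (p : ℝ≥0∞) [Fact (1 ≤ p)] (hp : p ≠ ⊤)
    (A : Set Ω) (hA : MeasurableSet A)
    (hcond : ∀ f : Lp ℂ p μ, ∀ᵐ x ∂μ, x ∈ A → ‖f x‖ ≤ ‖f‖)
    (g : Ω → ℂ) (hg : Measurable g) (hgA : MemLp (A.indicator g) p μ) :
    ¬ SigmaPorous {f : Lp ℂ p μ | ∀ᵐ x ∂μ, x ∈ A → ‖g x‖ ≤ ‖f x‖} :=
  nsp_main μ p hp A hA hcond g hg hgA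
end

section
/- Let $p\geq 1$ and $A$ be a non-empty set. Then for each $g\in\ell^p(A)$, the set $\Gamma_g=\{f\in\ell^p(A): |f(a)|\geq|g(a)| \text{ for all } a\in A\}$ is not $\sigma$-porous in $\ell^p(A)$. -/
open MeasureTheory Metric Set ENNReal
set_option maxHeartbeats 1000000
set_option synthInstance.maxHeartbeats 400000
open scoped Classical


noncomputable def ph (z : ℂ) : ℂ := if z = 0 then 1 else z / ‖z‖

lemma ph_norm (z : ℂ) : ‖ph z‖ = 1 := by
  unfold ph; split_ifs with h
  · simp
  · rw [norm_div]
    have : ‖z‖ ≠ 0 := norm_ne_zero_iff.2 h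
    simp only [Complex.norm_real, Real.norm_eq_abs, abs_of_nonneg (norm_nonneg z)]
    exact div_self (by simpa using this)

lemma ph_mul_norm (z : ℂ) : ph z * (‖z‖ : ℂ) = z := by
  unfold ph; split_ifs with h
  · simp [h]
  · have : ((‖z‖ : ℝ) : ℂ) ≠ 0 := by
      simpa using norm_ne_zero_iff.2 h
    exact div_mul_cancel₀ z this

lemma ph_mul_real_norm (z : ℂ) (r : ℝ) (hr : 0 ≤ r) : ‖ph z * (r : ℂ)‖ = r := by
  rw [norm_mul, ph_norm, one_mul, Complex.norm_real, Real.norm_eq_abs, abs_of_nonneg hr]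

lemma ph_mul_sub_norm (z : ℂ) (r : ℝ) : ‖ph z * (r : ℂ) - z‖ = |r - ‖z‖| := by
  have h1 : ph z * (r : ℂ) - z = ph z * (((r - ‖z‖ : ℝ)) : ℂ) := by
    push_cast
    rw [mul_sub, ph_mul_norm]
  rw [h1, norm_mul, ph_norm, one_mul, Complex.norm_real, Real.norm_eq_abs]


noncomputable def bumpC {A : Type*} (K marg : ℝ) (s : Finset A) (h c : A → ℂ) : A → ℂ :=
  fun a => if a ∈ s then ph (c a) * ((‖c a‖ + marg : ℝ) : ℂ)
    else ph (c a) * ((max ‖c a‖ (K * ‖h a‖) : ℝ) : ℂ)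

noncomputable def bumpH {A : Type*} (K marg : ℝ) (s : Finset A) (h : A → ℂ) : A → ℂ :=
  fun a => if a ∈ s then ph (h a) * ((‖h a‖ + marg/2 : ℝ) : ℂ)
    else ph (h a) * (((K/2) * ‖h a‖ : ℝ) : ℂ)

noncomputable def projZ {A : Type*} (h y : A → ℂ) : A → ℂ :=
  fun a => if ‖h a‖ ≤ ‖y a‖ then y a else ph (y a) * ((‖h a‖ : ℝ) : ℂ)

lemma tsum_split_bound {A : Type*} {F G : A → ℝ} (hF : Summable F) (hG : Summable G)
    (hFG : ∀ a, F a ≤ G a) {s : Finset A} {B1 B2 : ℝ}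
    (h1 : ∀ a ∈ s, G a ≤ B1) (h2 : ∑' a : {x // x ∉ s}, G a ≤ B2) :
    ∑' a, F a ≤ s.card * B1 + B2 := by
  have hle : ∑' a, F a ≤ ∑' a, G a := Summable.tsum_le_tsum hFG hF hG
  have hsplit := Summable.sum_add_tsum_compl (s := s) hG
  have hs1 : ∑ a ∈ s, G a ≤ s.card * B1 := by
    calc ∑ a ∈ s, G a ≤ ∑ _a ∈ s, B1 := Finset.sum_le_sum h1
    _ = s.card * B1 := by rw [Finset.sum_const, nsmul_eq_mul]
  have hs2 : ∑' (x : ↑(↑s : Set A)ᶜ), G ↑x ≤ B2 := by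
    calc ∑' (x : ↑(↑s : Set A)ᶜ), G ↑x = ∑' a : {x // x ∉ s}, G a := by rfl
    _ ≤ B2 := h2
  linarith [hle, hsplit, hs1, hs2]

section lpFacts

variable {A : Type*} {p : ℝ≥0∞} [Fact (1 ≤ p)]

lemma coord_dist (hp0 : p ≠ 0) (f f' : lp (fun _ : A => ℂ) p) (a : A) :
    ‖f a - f' a‖ ≤ dist f f' := by
  have := lp.norm_apply_le_norm hp0 (f - f') a
  rwa [lp.coeFn_sub, Pi.sub_apply, ← dist_eq_norm f f'] at this

lemma gammaClosed (h : lp (fun _ : A => ℂ) p) (hp0 : p ≠ 0) :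
    IsClosed {f : lp (fun _ : A => ℂ) p | ∀ a, ‖h a‖ ≤ ‖f a‖} := by
  have : {f : lp (fun _ : A => ℂ) p | ∀ a, ‖h a‖ ≤ ‖f a‖} =
      ⋂ a, {f : lp (fun _ : A => ℂ) p | ‖h a‖ ≤ ‖f a‖} := by
    ext f; simp [Set.mem_iInter]
  rw [this]
  refine isClosed_iInter fun a => ?_
  have hlip : LipschitzWith 1 (fun f : lp (fun _ : A => ℂ) p => f a) := by
    refine LipschitzWith.of_dist_le_mul fun f f' => ?_
    rw [NNReal.coe_one, one_mul, dist_eq_norm, dist_eq_norm]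
    exact (coord_dist hp0 f f' a).trans_eq (dist_eq_norm f f')
  have hcont : Continuous fun f : lp (fun _ : A => ℂ) p => ‖f a‖ :=
    hlip.continuous.norm
  exact isClosed_le continuous_const hcont

lemma hp0_of_fact : p ≠ 0 := by
  intro h0
  have h1 : (1 : ℝ≥0∞) ≤ p := Fact.out
  rw [h0] at h1
  simp at h1

lemma step_lemma (hptop : p ≠ ∞) (S : Set (lp (fun _ : A => ℂ) p)) (lam : ℝ)
    (hl0 : 0 < lam) (hl1 : lam < 1) (hPor : Porous lam S)
    (h c : lp (fun _ : A => ℂ) p) (R : ℝ) (hR : 0 < R)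
    (hhc : ∀ a, ‖h a‖ ≤ ‖c a‖) :
    ∃ h' c' : lp (fun _ : A => ℂ) p, ∃ R' : ℝ,
      0 < R' ∧ R' ≤ R / 32 ∧ (∀ a, ‖h a‖ ≤ ‖h' a‖) ∧ (∀ a, ‖h' a‖ ≤ ‖c' a‖) ∧
      dist c c' ≤ 2 * R ∧
      ∀ x : lp (fun _ : A => ℂ) p, (∀ a, ‖h' a‖ ≤ ‖x a‖) → dist x c' ≤ 3 * R' → x ∉ S := by
  classical
  have hp0 : p ≠ 0 := hp0_of_fact
  have hq : 0 < p.toReal := ENNReal.toReal_pos hp0 hptop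
  have hq1 : 1 ≤ p.toReal := by
    have := ENNReal.toReal_mono hptop (Fact.out : (1 : ℝ≥0∞) ≤ p)
    simpa using this
  set q := p.toReal with hqdef
  by_cases hAcase : ∃ w : lp (fun _ : A => ℂ) p, (∀ a, ‖h a‖ ≤ ‖w a‖) ∧ dist w c ≤ R ∧
      ∃ ρ : ℝ, 0 < ρ ∧ ρ ≤ R ∧ Metric.ball w ρ ∩ S = ∅
  · obtain ⟨w, hwh, hwc, ρ, hρ0, hρR, hball⟩ := hAcase
    refine ⟨h, w, min (ρ/8) (R/32), by positivity, min_le_right _ _, fun a => le_rfl, hwh,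
      by rw [dist_comm]; linarith, ?_⟩
    intro x hx hdx hxS
    have hlt : dist x w < ρ := by
      have h1 : min (ρ/8) (R/32) ≤ ρ/8 := min_le_left _ _
      linarith
    exact (Set.eq_empty_iff_forall_notMem.1 hball x) ⟨Metric.mem_ball.2 hlt, hxS⟩
  · push_neg at hAcase
    set K := 4 / lam with hKdef
    have hK4 : 4 ≤ K := by
      rw [hKdef, le_div_iff₀ hl0]; nlinarith
    have hK0 : 0 < K := by linarith
    have hlamK : lam * K = 4 := by
      rw [hKdef]; field_simp
    clear_value K
    have hsum : Summable fun a => ‖h a‖ ^ q := (lp.memℓp h).summable hq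
    have hζ : (0:ℝ) < (R/(16*K)) ^ q := Real.rpow_pos_of_pos (by positivity) _
    obtain ⟨s, hs⟩ : ∃ s : Finset A, ∑' a : {x // x ∉ s}, ‖h (a : A)‖ ^ q < (R/(16*K)) ^ q := by
      have := (tendsto_order.1 (tendsto_tsum_compl_atTop_zero (fun a => ‖h a‖ ^ q))).2 _ hζ
      exact this.exists
    obtain ⟨marg, hm0, hmR, hmcard⟩ : ∃ marg : ℝ, 0 < marg ∧ marg ≤ R ∧
        (s.card : ℝ) * marg ^ q ≤ (R/16) ^ q := by
      have hx16 : (0:ℝ) < (R/16) ^ q := Real.rpow_pos_of_pos (by positivity) _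
      refine ⟨min 1 (min R ((R/16) ^ q / (s.card + 1))), by positivity,
        le_trans (le_trans (min_le_right _ _) (min_le_left _ _)) le_rfl, ?_⟩
      set m := min 1 (min R ((R/16) ^ q / (s.card + 1))) with hm
      have hm0' : 0 < m := by positivity
      have hm1 : m ≤ 1 := min_le_left _ _
      have hmq : m ^ q ≤ m := by
        calc m ^ q ≤ m ^ (1:ℝ) := Real.rpow_le_rpow_of_exponent_ge hm0' hm1 hq1
        _ = m := Real.rpow_one m
      have hm2 : m ≤ (R/16) ^ q / (s.card + 1) := le_trans (min_le_right _ _) (min_le_right _ _)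
      have hcard1 : (0:ℝ) < (s.card : ℝ) + 1 := by positivity
      calc (s.card : ℝ) * m ^ q ≤ (s.card : ℝ) * m :=
            mul_le_mul_of_nonneg_left hmq (Nat.cast_nonneg _)
      _ ≤ (s.card : ℝ) * ((R/16) ^ q / (s.card + 1)) :=
            mul_le_mul_of_nonneg_left hm2 (Nat.cast_nonneg _)
      _ = ((s.card : ℝ) / (s.card + 1)) * (R/16) ^ q := by ring
      _ ≤ 1 * (R/16) ^ q := by
            apply mul_le_mul_of_nonneg_right _ (le_of_lt hx16)
            rw [div_le_one hcard1]; linarith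
      _ = (R/16) ^ q := one_mul _
    -- the perturbed center and the new lower bound function
    set c'f : A → ℂ := bumpC K marg s (⇑h) (⇑c) with hc'f
    set h'f : A → ℂ := bumpH K marg s (⇑h) with hh'f
    clear_value c'f h'f
    have hc'n : ∀ a, ‖c'f a‖ = if a ∈ s then ‖c a‖ + marg else max ‖c a‖ (K * ‖h a‖) := by
      intro a; rw [hc'f]; unfold bumpC; split_ifs with ha
      · exact ph_mul_real_norm _ _ (by positivity)
      · exact ph_mul_real_norm _ _ (le_trans (norm_nonneg _) (le_max_left _ _))
    have hh'n : ∀ a, ‖h'f a‖ = if a ∈ s then ‖h a‖ + marg/2 else (K/2) * ‖h a‖ := by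
      intro a; rw [hh'f]; unfold bumpH; split_ifs with ha
      · exact ph_mul_real_norm _ _ (by positivity)
      · exact ph_mul_real_norm _ _ (by positivity)
    have hdiff : ∀ a, ‖c'f a - c a‖ ≤ if a ∈ s then marg else K * ‖h a‖ := by
      intro a; rw [hc'f]; unfold bumpC; split_ifs with ha
      · rw [ph_mul_sub_norm, add_sub_cancel_left, abs_of_pos hm0]
      · 
        rw [ph_mul_sub_norm, abs_of_nonneg (sub_nonneg.2 (le_max_left _ _))]
        have h1 : max ‖c a‖ (K * ‖h a‖) ≤ ‖c a‖ + K * ‖h a‖ :=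
          max_le (le_add_of_nonneg_right (by positivity)) (le_add_of_nonneg_left (norm_nonneg _))
        linarith
    have hsumKh : Summable fun a => (K * ‖h a‖) ^ q := by
      have heq : ∀ a, (K * ‖h a‖) ^ q = K ^ q * ‖h a‖ ^ q := fun a =>
        Real.mul_rpow (le_of_lt hK0) (norm_nonneg _)
      simp only [heq]
      exact hsum.mul_left _
    have hsumG : Summable fun a => if a ∈ s then marg ^ q else (K * ‖h a‖) ^ q := by
      have : (fun a => if a ∈ s then marg ^ q else (K * ‖h a‖) ^ q) =
          (fun a => (if a ∈ s then marg ^ q - (K * ‖h a‖) ^ q else 0) + (K * ‖h a‖) ^ q) := by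
        funext a; split_ifs <;> ring
      rw [this]
      exact (summable_of_ne_finset_zero (s := s) (fun a ha => if_neg ha)).add hsumKh
    have hmemdiff : Memℓp (c'f - ⇑c) p := by
      apply memℓp_gen
      refine Summable.of_nonneg_of_le (fun a => Real.rpow_nonneg (norm_nonneg _) _)
        (fun a => ?_) hsumG
      have h1 : ‖(c'f - ⇑c) a‖ = ‖c'f a - c a‖ := rfl
      rw [h1]
      split_ifs with ha
      · refine Real.rpow_le_rpow (norm_nonneg _) ?_ (le_of_lt hq)
        have := hdiff a; rwa [if_pos ha] at this
      · refine Real.rpow_le_rpow (norm_nonneg _) ?_ (le_of_lt hq)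
        have := hdiff a; rwa [if_neg ha] at this
    have hmemc' : Memℓp c'f p := by
      have := hmemdiff.add (lp.memℓp c)
      simpa using this
    have hmemh' : Memℓp h'f p := by
      apply memℓp_gen
      have hb : Summable fun a => (if a ∈ s then (‖h a‖ + marg/2) ^ q - (K * ‖h a‖) ^ q else 0)
          + (K * ‖h a‖) ^ q :=
        (summable_of_ne_finset_zero (s := s) (fun a ha => if_neg ha)).add hsumKh
      refine Summable.of_nonneg_of_le (fun a => Real.rpow_nonneg (norm_nonneg _) _)
        (fun a => ?_) hb
      rw [hh'n a]
      split_ifs with ha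
      · simp only [sub_add_cancel]
        exact Real.rpow_le_rpow (by positivity) le_rfl (le_of_lt hq)
      · rw [zero_add]
        refine Real.rpow_le_rpow (by positivity) ?_ (le_of_lt hq)
        have := norm_nonneg (h a); nlinarith
    set c' : lp (fun _ : A => ℂ) p := ⟨c'f, hmemc'⟩ with hc'def
    set h' : lp (fun _ : A => ℂ) p := ⟨h'f, hmemh'⟩ with hh'def
    have hc'coe : ∀ a, (c' : ∀ _ : A, ℂ) a = c'f a := fun a => rfl
    have hh'coe : ∀ a, (h' : ∀ _ : A, ℂ) a = h'f a := fun a => rfl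
    clear_value c' h'
    -- distance from c to c'
    have hN1 : dist c c' ≤ R / 8 := by
      rw [dist_eq_norm]
      refine lp.norm_le_of_tsum_le hq (by positivity) ?_
      have hFsum : Summable fun a => ‖(c - c') a‖ ^ q := (lp.memℓp (c - c')).summable hq
      have hptw : ∀ a, ‖(c - c') a‖ ^ q ≤ (if a ∈ s then marg ^ q else (K * ‖h a‖) ^ q) := by
        intro a
        have h1 : ‖(c - c') a‖ = ‖c'f a - c a‖ := by
          rw [lp.coeFn_sub, Pi.sub_apply, norm_sub_rev, hc'coe]
        rw [h1]
        split_ifs with ha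
        · refine Real.rpow_le_rpow (norm_nonneg _) ?_ (le_of_lt hq)
          have := hdiff a; rwa [if_pos ha] at this
        · refine Real.rpow_le_rpow (norm_nonneg _) ?_ (le_of_lt hq)
          have := hdiff a; rwa [if_neg ha] at this
      have htail : ∑' a : {x // x ∉ s}, (if (a:A) ∈ s then marg ^ q else (K * ‖h (a:A)‖) ^ q)
          ≤ K ^ q * (R/(16*K)) ^ q := by
        have heq : ∀ a : {x // x ∉ s}, (if (a:A) ∈ s then marg ^ q else (K * ‖h (a:A)‖) ^ q)
            = K ^ q * ‖h (a:A)‖ ^ q := by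
          intro a
          rw [if_neg a.2, Real.mul_rpow (le_of_lt hK0) (norm_nonneg _)]
        rw [tsum_congr heq, tsum_mul_left]
        exact mul_le_mul_of_nonneg_left (le_of_lt hs) (Real.rpow_nonneg (le_of_lt hK0) _)
      have hmain := tsum_split_bound hFsum hsumG hptw
        (fun a ha => by rw [if_pos ha]) htail
      have hKq : K ^ q * (R/(16*K)) ^ q = (R/16) ^ q := by
        rw [← Real.mul_rpow (le_of_lt hK0) (by positivity)]
        congr 1
        field_simp
      have h2q : (2:ℝ) ≤ 2 ^ q := by
        calc (2:ℝ) = 2 ^ (1:ℝ) := (Real.rpow_one 2).symm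
        _ ≤ 2 ^ q := Real.rpow_le_rpow_of_exponent_le one_le_two hq1
      have hR8 : (R/8) ^ q = 2 ^ q * (R/16) ^ q := by
        rw [← Real.mul_rpow (by norm_num) (by positivity)]
        congr 1; ring
      have hx16 : (0:ℝ) < (R/16) ^ q := Real.rpow_pos_of_pos (by positivity) _
      calc ∑' a, ‖(c - c') a‖ ^ q ≤ s.card * marg ^ q + K ^ q * (R/(16*K)) ^ q := hmain
      _ ≤ (R/16) ^ q + (R/16) ^ q := by rw [hKq]; linarith
      _ = 2 * (R/16) ^ q := by ring
      _ ≤ 2 ^ q * (R/16) ^ q := mul_le_mul_of_nonneg_right h2q (le_of_lt hx16)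
      _ = (R/8) ^ q := hR8.symm
    refine ⟨h', c', R/32, by positivity, le_rfl, ?_, ?_, by linarith, ?_⟩
    · intro a
      rw [hh'coe, hh'n]
      split_ifs with ha
      · linarith
      · have := norm_nonneg (h a); nlinarith
    · intro a
      rw [hh'coe, hc'coe, hh'n, hc'n]
      split_ifs with ha
      · have := hhc a; linarith
      · calc (K/2) * ‖h a‖ ≤ K * ‖h a‖ := by
              have := norm_nonneg (h a); nlinarith
        _ ≤ max ‖c a‖ (K * ‖h a‖) := le_max_right _ _
    -- the kill property
    · intro x hx hdx hxS
      have hPx := hPor x hxS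
      obtain ⟨y, hyb, hyne, hhole⟩ := hPx (min (marg/4) (R/8)) (by positivity)
      set d := dist x y with hd
      clear_value d
      have hd0 : 0 < d := by rw [hd]; exact dist_pos.2 (Ne.symm hyne)
      have hdδ : d < min (marg/4) (R/8) := by
        rw [hd, dist_comm]; exact Metric.mem_ball.1 hyb
      have hdm : d < marg/4 := lt_of_lt_of_le hdδ (min_le_left _ _)
      have hdR : d < R/8 := lt_of_lt_of_le hdδ (min_le_right _ _)
      set zf : A → ℂ := projZ (⇑h) (⇑y) with hzf
      clear_value zf
      have hz1 : ∀ a, ‖zf a - y a‖ ≤ (lam/2) * ‖x a - y a‖ := by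
        intro a
        have hea : ‖x a - y a‖ ≤ d := by rw [hd]; exact coord_dist hp0 x y a
        by_cases hb : ‖h a‖ ≤ ‖y a‖
        · rw [hzf]; unfold projZ; simp only [if_pos hb, sub_self, norm_zero]
          positivity
        · push_neg at hb
          have hxa := hx a
          rw [hh'coe, hh'n] at hxa
          have hnxy : ‖x a‖ - ‖y a‖ ≤ ‖x a - y a‖ := by
            have := norm_sub_norm_le (x a) (y a); linarith [abs_le.1 (abs_norm_sub_norm_le (x a) (y a))]
          by_cases ha : a ∈ s
          · exfalso
            rw [if_pos ha] at hxa
            have : ‖y a‖ ≥ ‖x a‖ - ‖x a - y a‖ := by linarith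
            have : ‖y a‖ ≥ ‖h a‖ + marg/2 - d := by linarith
            linarith
          · rw [if_neg ha] at hxa
            rw [hzf]; unfold projZ; simp only [if_neg (not_le.2 hb)]
            rw [ph_mul_sub_norm, abs_of_nonneg (by linarith)]
            have hKe : (K/2) * (‖h a‖ - ‖y a‖) ≤ ‖x a - y a‖ := by
              have h1 : (K/2) * ‖h a‖ - ‖y a‖ ≤ ‖x a‖ - ‖y a‖ := by linarith
              have h2 : (K/2) * (‖h a‖ - ‖y a‖) ≤ (K/2) * ‖h a‖ - ‖y a‖ := by
                have := norm_nonneg (y a); nlinarith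
              linarith
            have hKlam : (lam/2) * ((K/2) * (‖h a‖ - ‖y a‖)) = ‖h a‖ - ‖y a‖ := by
              calc (lam/2) * ((K/2) * (‖h a‖ - ‖y a‖)) = (lam * K) * (‖h a‖ - ‖y a‖) / 4 := by
                    ring
              _ = ‖h a‖ - ‖y a‖ := by rw [hlamK]; ring
            nlinarith [mul_le_mul_of_nonneg_left hKe (by positivity : (0:ℝ) ≤ lam/2)]
      have hmemz : Memℓp (zf - ⇑y) p := by
        apply memℓp_gen
        have hbsum : Summable fun a => (lam/2) ^ q * ‖(x - y) a‖ ^ q :=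
          ((lp.memℓp (x - y)).summable hq).mul_left _
        refine Summable.of_nonneg_of_le (fun a => Real.rpow_nonneg (norm_nonneg _) _)
          (fun a => ?_) hbsum
        calc ‖(zf - ⇑y) a‖ ^ p.toReal = ‖zf a - y a‖ ^ q := rfl
        _ ≤ ((lam/2) * ‖x a - y a‖) ^ q :=
              Real.rpow_le_rpow (norm_nonneg _) (hz1 a) (le_of_lt hq)
        _ = (lam/2) ^ q * ‖x a - y a‖ ^ q := Real.mul_rpow (by positivity) (norm_nonneg _)
        _ = (lam/2) ^ q * ‖(x - y) a‖ ^ q := by rw [lp.coeFn_sub]; rfl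
      set z : lp (fun _ : A => ℂ) p := ⟨zf - ⇑y, hmemz⟩ + y with hzdef
      have hzcoe : ∀ a, z a = zf a := by
        intro a
        rw [hzdef, lp.coeFn_add]
        show (zf - ⇑y) a + y a = zf a
        simp
      have hzy : dist z y ≤ (lam/2) * d := by
        have hzsub : z - y = (⟨zf - ⇑y, hmemz⟩ : lp (fun _ : A => ℂ) p) := by
          rw [hzdef]; exact add_sub_cancel_right _ _
        rw [dist_eq_norm, hzsub]
        refine lp.norm_le_of_tsum_le hq (by positivity) ?_
        have hFsum : Summable fun a => ‖zf a - y a‖ ^ q := by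
          have := hmemz.summable hq
          exact this
        have hGsum : Summable fun a => (lam/2) ^ q * ‖(x - y) a‖ ^ q :=
          ((lp.memℓp (x - y)).summable hq).mul_left _
        have hptw : ∀ a, ‖zf a - y a‖ ^ q ≤ (lam/2) ^ q * ‖(x - y) a‖ ^ q := by
          intro a
          calc ‖zf a - y a‖ ^ q ≤ ((lam/2) * ‖x a - y a‖) ^ q :=
                Real.rpow_le_rpow (norm_nonneg _) (hz1 a) (le_of_lt hq)
          _ = (lam/2) ^ q * ‖x a - y a‖ ^ q := Real.mul_rpow (by positivity) (norm_nonneg _)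
          _ = (lam/2) ^ q * ‖(x - y) a‖ ^ q := by rw [lp.coeFn_sub]; rfl
        have hsum2 : ∑' a, (lam/2) ^ q * ‖(x - y) a‖ ^ q = ((lam/2) * d) ^ q := by
          rw [tsum_mul_left, ← lp.norm_rpow_eq_tsum hq,
            ← Real.mul_rpow (by positivity) (norm_nonneg _)]
          congr 2
          rw [hd, dist_eq_norm]
        calc ∑' a, ‖(⟨zf - ⇑y, hmemz⟩ : lp (fun _ : A => ℂ) p) a‖ ^ q
            = ∑' a, ‖zf a - y a‖ ^ q := rfl
        _ ≤ ∑' a, (lam/2) ^ q * ‖(x - y) a‖ ^ q := Summable.tsum_le_tsum hptw hFsum hGsum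
        _ = ((lam/2) * d) ^ q := hsum2
      have hzΓ : ∀ a, ‖h a‖ ≤ ‖z a‖ := by
        intro a
        rw [hzcoe, hzf]; unfold projZ
        split_ifs with hb
        · exact hb
        · rw [ph_mul_real_norm _ _ (norm_nonneg _)]
      have hzc : dist z c ≤ R := by
        have h1 : dist z c ≤ dist z y + dist y x + dist x c' + dist c' c := by
          have t1 := dist_triangle z y c
          have t2 := dist_triangle y x c
          have t3 := dist_triangle x c' c
          linarith
        have h2 : dist y x = d := by rw [hd, dist_comm]
        have h3 : dist c' c = dist c c' := dist_comm _ _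
        have h4 : dist z y ≤ d := by
          have : (lam/2) * d ≤ d := by nlinarith
          linarith
        linarith [hdx, hN1]
      have hρ' : 0 < lam * d - dist z y := by
        have : dist z y ≤ (lam/2) * d := hzy
        nlinarith
      have hρ'R : lam * d - dist z y ≤ R := by
        have hdz := dist_nonneg (x := z) (y := y)
        nlinarith
      have hne := hAcase z hzΓ hzc (lam * d - dist z y) hρ' hρ'R
      obtain ⟨u, hub, huS⟩ := hne
      have huy : dist u y < lam * d := by
        have h1 : dist u z < lam * d - dist z y := Metric.mem_ball.1 hub
        have h2 := dist_triangle u z y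
        have h3 : dist z y = dist z y := rfl
        linarith [h2, h1]
      rw [Set.eq_empty_iff_forall_notMem] at hhole
      exact hhole u ⟨Metric.mem_ball.2 huy, huS⟩

end lpFacts

/-- For each `g ∈ ℓ^p(A)`, the set `{f ∈ ℓ^p(A) : |f(a)| ≥ |g(a)| for all a}` is not
`σ`-porous in `ℓ^p(A)`. -/
theorem stmt_3 {A : Type*} [Nonempty A] (p : ℝ≥0∞) [Fact (1 ≤ p)]
    (g : lp (fun _ : A => ℂ) p) :
    ¬ SigmaPorous {f : lp (fun _ : A => ℂ) p | ∀ a : A, ‖g a‖ ≤ ‖f a‖} := by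
  rintro ⟨S, hS, hU⟩
  have hp0 : p ≠ 0 := hp0_of_fact
  by_cases hptop : p = ∞
  · -- p = ∞ : the set has nonempty interior; use Baire
    subst hptop
    have hmem : Memℓp (fun a : A => ph (g a) * ((‖g a‖ + 1 : ℝ) : ℂ)) ∞ := by
      apply memℓp_infty
      refine ⟨‖g‖ + 1, ?_⟩
      rintro - ⟨a, rfl⟩
      show ‖ph (g a) * ((‖g a‖ + 1 : ℝ) : ℂ)‖ ≤ ‖g‖ + 1
      rw [ph_mul_real_norm _ _ (by positivity)]
      have := lp.norm_apply_le_norm hp0 g a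
      linarith
    set x₀ : lp (fun _ : A => ℂ) ∞ := ⟨fun a : A => ph (g a) * ((‖g a‖ + 1 : ℝ) : ℂ), hmem⟩
      with hx₀
    have hx₀n : ∀ a, ‖x₀ a‖ = ‖g a‖ + 1 := fun a => ph_mul_real_norm _ _ (by positivity)
    have hball : ∀ v : lp (fun _ : A => ℂ) ∞, dist v x₀ ≤ 1 → ∀ a, ‖g a‖ ≤ ‖v a‖ := by
      intro v hv a
      have h1 : ‖x₀ a - v a‖ ≤ dist x₀ v := coord_dist hp0 x₀ v a
      have h2 : ‖x₀ a‖ - ‖v a‖ ≤ ‖x₀ a - v a‖ := norm_sub_norm_le _ _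
      rw [hx₀n a] at h2
      rw [dist_comm] at h1
      linarith
    have hdense : ∀ n, Dense ((closure (S n))ᶜ) := by
      intro n
      rw [← interior_eq_empty_iff_dense_compl]
      by_contra hne
      obtain ⟨z, hz⟩ := Set.nonempty_iff_ne_empty.2 hne
      obtain ⟨ε, hε0, hεsub⟩ := Metric.isOpen_iff.1 isOpen_interior z hz
      have hzc : z ∈ closure (S n) := interior_subset hz
      obtain ⟨s₀, hs₀S, hs₀d⟩ := Metric.mem_closure_iff.1 hzc (ε/4) (by positivity)
      obtain ⟨lam, hl0, hl1, hPor⟩ := hS n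
      obtain ⟨y, hyb, hyne, hhole⟩ := hPor s₀ hs₀S (ε/4) (by positivity)
      have hd0 : 0 < dist s₀ y := dist_pos.2 (Ne.symm hyne)
      have hyc : y ∈ closure (S n) := by
        apply hεsub.trans interior_subset
        rw [Metric.mem_ball]
        have h1 : dist y s₀ < ε/4 := Metric.mem_ball.1 hyb
        have h2 : dist s₀ z < ε/4 := by rw [dist_comm]; exact hs₀d
        calc dist y z ≤ dist y s₀ + dist s₀ z := dist_triangle y s₀ z
        _ < ε := by linarith
      obtain ⟨u, huS, hud⟩ := Metric.mem_closure_iff.1 hyc (lam * dist s₀ y) (by positivity)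
      rw [Set.eq_empty_iff_forall_notMem] at hhole
      exact hhole u ⟨Metric.mem_ball.2 (by rw [dist_comm]; exact hud), huS⟩
    have hD : Dense (⋂ n, (closure (S n))ᶜ) :=
      dense_iInter_of_isOpen (fun n => isOpen_compl_iff.2 isClosed_closure) hdense
    obtain ⟨v, hvD, hvB⟩ := hD.exists_mem_open Metric.isOpen_ball
      ⟨x₀, Metric.mem_ball_self one_pos⟩
    have hvΓ : v ∈ {f : lp (fun _ : A => ℂ) ∞ | ∀ a : A, ‖g a‖ ≤ ‖f a‖} :=
      hball v (le_of_lt (Metric.mem_ball.1 hvB))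
    rw [hU] at hvΓ
    obtain ⟨m, hvm⟩ := Set.mem_iUnion.1 hvΓ
    exact (Set.mem_iInter.1 hvD m) (subset_closure hvm)
  · -- 1 ≤ p < ∞ : the main construction
    obtain ⟨seq, hseq0, hseqS⟩ : ∃ seq : ℕ →
        {t : (lp (fun _ : A => ℂ) p) × (lp (fun _ : A => ℂ) p) × ℝ //
          0 < t.2.2 ∧ ∀ a, ‖t.1 a‖ ≤ ‖t.2.1 a‖},
        seq 0 = ⟨(g, g, 1), one_pos, fun a => le_rfl⟩ ∧ ∀ n,
          (seq (n+1)).1.2.2 ≤ (seq n).1.2.2 / 32 ∧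
          (∀ a, ‖(seq n).1.1 a‖ ≤ ‖(seq (n+1)).1.1 a‖) ∧
          dist (seq n).1.2.1 (seq (n+1)).1.2.1 ≤ 2 * (seq n).1.2.2 ∧
          (∀ x : lp (fun _ : A => ℂ) p, (∀ a, ‖(seq (n+1)).1.1 a‖ ≤ ‖x a‖) →
            dist x (seq (n+1)).1.2.1 ≤ 3 * (seq (n+1)).1.2.2 → x ∉ S n) := by
      have hstep : ∀ (n : ℕ)
          (t : {t : (lp (fun _ : A => ℂ) p) × (lp (fun _ : A => ℂ) p) × ℝ //
            0 < t.2.2 ∧ ∀ a, ‖t.1 a‖ ≤ ‖t.2.1 a‖}),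
          ∃ t' : {t : (lp (fun _ : A => ℂ) p) × (lp (fun _ : A => ℂ) p) × ℝ //
            0 < t.2.2 ∧ ∀ a, ‖t.1 a‖ ≤ ‖t.2.1 a‖},
          t'.1.2.2 ≤ t.1.2.2 / 32 ∧ (∀ a, ‖t.1.1 a‖ ≤ ‖t'.1.1 a‖) ∧
          dist t.1.2.1 t'.1.2.1 ≤ 2 * t.1.2.2 ∧
          (∀ x : lp (fun _ : A => ℂ) p, (∀ a, ‖t'.1.1 a‖ ≤ ‖x a‖) →
            dist x t'.1.2.1 ≤ 3 * t'.1.2.2 → x ∉ S n) := by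
        intro n t
        obtain ⟨lam, hl0, hl1, hPor⟩ := hS n
        obtain ⟨h', c', R', hR'0, hR', hmono, hhc', hdist, hkill⟩ :=
          step_lemma hptop (S n) lam hl0 hl1 hPor t.1.1 t.1.2.1 t.1.2.2 t.2.1 t.2.2
        exact ⟨⟨(h', c', R'), hR'0, hhc'⟩, hR', hmono, hdist, hkill⟩
      refine ⟨fun n => Nat.rec ⟨(g, g, 1), one_pos, fun a => le_rfl⟩
        (fun n prev => Classical.choose (hstep n prev)) n, rfl, fun n => ?_⟩
      exact Classical.choose_spec (hstep n _)
    set hh : ℕ → lp (fun _ : A => ℂ) p := fun n => (seq n).1.1 with hhdef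
    set cc : ℕ → lp (fun _ : A => ℂ) p := fun n => (seq n).1.2.1 with hccdef
    set RR : ℕ → ℝ := fun n => (seq n).1.2.2 with hRRdef
    have hR0 : ∀ n, 0 < RR n := fun n => (seq n).2.1
    have hhcn : ∀ n a, ‖hh n a‖ ≤ ‖cc n a‖ := fun n => (seq n).2.2
    have hR32 : ∀ n, RR (n+1) ≤ RR n / 32 := fun n => (hseqS n).1
    have hmono : ∀ n a, ‖hh n a‖ ≤ ‖hh (n+1) a‖ := fun n => (hseqS n).2.1
    have hcd : ∀ n, dist (cc n) (cc (n+1)) ≤ 2 * RR n := fun n => (hseqS n).2.2.1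
    have hkill : ∀ n, ∀ x : lp (fun _ : A => ℂ) p, (∀ a, ‖hh (n+1) a‖ ≤ ‖x a‖) →
        dist x (cc (n+1)) ≤ 3 * RR (n+1) → x ∉ S n := fun n => (hseqS n).2.2.2
    have hR1 : RR 0 = 1 := by show ((seq 0).1.2.2) = 1; rw [hseq0]
    have hRgeo : ∀ n k, RR (k + n) ≤ RR n * (1/32) ^ k := by
      intro n k
      induction k with
      | zero => simp
      | succ k ih =>
        have h1 := hR32 (k + n)
        have h2 : RR (k + n) / 32 ≤ RR n * (1/32) ^ k / 32 := by linarith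
        calc RR (k + 1 + n) = RR ((k + n) + 1) := by ring_nf
        _ ≤ RR (k + n) / 32 := h1
        _ ≤ RR n * (1/32) ^ k / 32 := h2
        _ = RR n * (1/32) ^ (k+1) := by ring
    have hmonok : ∀ n k a, ‖hh n a‖ ≤ ‖hh (k + n) a‖ := by
      intro n k a
      induction k with
      | zero => simp
      | succ k ih =>
        calc ‖hh n a‖ ≤ ‖hh (k + n) a‖ := ih
        _ ≤ ‖hh ((k + n) + 1) a‖ := hmono (k + n) a
        _ = ‖hh (k + 1 + n) a‖ := by ring_nf
    have hcauchy : CauchySeq cc := by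
      apply cauchySeq_of_le_geometric (1/32) 2 (by norm_num)
      intro n
      calc dist (cc n) (cc (n+1)) ≤ 2 * RR n := hcd n
      _ ≤ 2 * (RR 0 * (1/32) ^ n) := by
            have := hRgeo 0 n
            rw [Nat.add_zero] at this
            linarith
      _ = 2 * (1/32) ^ n := by rw [hR1]; ring
    obtain ⟨x, hx⟩ := cauchySeq_tendsto_of_complete hcauchy
    have hxball : ∀ m, dist x (cc (m+1)) ≤ 3 * RR (m+1) := by
      intro m
      have htend : Filter.Tendsto (fun k => cc (k + (m+1))) Filter.atTop (nhds x) :=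
        hx.comp (Filter.tendsto_add_atTop_nat (m+1))
      have hgeo : ∀ k, dist (cc (k + (m+1))) (cc ((k+1) + (m+1))) ≤
          (2 * RR (m+1)) * (1/32) ^ k := by
        intro k
        have hidx : (k+1) + (m+1) = (k + (m+1)) + 1 := by ring
        rw [hidx]
        calc dist (cc (k + (m+1))) (cc ((k + (m+1)) + 1)) ≤ 2 * RR (k + (m+1)) :=
              hcd (k + (m+1))
        _ ≤ 2 * (RR (m+1) * (1/32) ^ k) := by linarith [hRgeo (m+1) k]
        _ = (2 * RR (m+1)) * (1/32) ^ k := by ring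
      have := dist_le_of_le_geometric_of_tendsto₀ (1/32) (2 * RR (m+1))
        (by norm_num) (f := fun k => cc (k + (m+1)))
        (fun k => hgeo k) htend
      simp only [Nat.zero_add] at this
      rw [dist_comm]
      calc dist (cc (m+1)) x ≤ 2 * RR (m+1) / (1 - 1/32) := this
      _ ≤ 3 * RR (m+1) := by
            have := hR0 (m+1); rw [div_le_iff₀ (by norm_num)]; nlinarith
    have hxΓ : ∀ m a, ‖hh m a‖ ≤ ‖x a‖ := by
      intro m
      have hmem : x ∈ {f : lp (fun _ : A => ℂ) p | ∀ a, ‖hh m a‖ ≤ ‖f a‖} := by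
        refine (gammaClosed (hh m) hp0).mem_of_tendsto hx ?_
        refine Filter.eventually_atTop.2 ⟨m, fun k hk a => ?_⟩
        obtain ⟨j, rfl⟩ := Nat.exists_eq_add_of_le hk
        calc ‖hh m a‖ ≤ ‖hh (j + m) a‖ := hmonok m j a
        _ = ‖hh (m + j) a‖ := by ring_nf
        _ ≤ ‖cc (m + j) a‖ := hhcn (m + j) a
      exact hmem
    have hxU : x ∈ ⋃ n, S n := by
      rw [← hU]
      intro a
      have := hxΓ 0 a
      have hg : hh 0 = g := by show ((seq 0).1.1) = g; rw [hseq0]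
      rwa [hg] at this
    obtain ⟨m, hxm⟩ := Set.mem_iUnion.1 hxU
    exact hkill m x (hxΓ (m+1)) (hxball m) hxm
end

section
/- Let $\Omega$ be a locally compact Hausdorff space and $\mu$ a nonnegative Radon measure on $\Omega$. Then for each $g\in L^\infty(\Omega,\mu)$, the set $\Gamma_g=\{f\in L^\infty(\Omega,\mu): |f|\geq|g| \text{ a.e.}\}$ is not $\sigma$-porous in $L^\infty(\Omega,\mu)$. -/
open MeasureTheory Metric Set ENNReal

/-- A `lam`-porous set (with `lam > 0`) in a metric space is nowhere dense. -/
lemma Porous.isNowhereDense {X : Type*} [MetricSpace X] {lam : ℝ} {E : Set X}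
    (hlam : 0 < lam) (hE : Porous lam E) : IsNowhereDense E := by
  rw [IsNowhereDense, Set.eq_empty_iff_forall_notMem]
  intro z hz
  rcases Metric.isOpen_iff.mp isOpen_interior z hz with ⟨ε, hε, hball⟩
  have hsub : Metric.ball z ε ⊆ closure E := hball.trans interior_subset
  -- pick a point of E close to z
  set δ : ℝ := ε / (2 * (1 + lam)) with hδdef
  have hδ : 0 < δ := by positivity
  have hδε : δ < ε := by
    rw [hδdef]
    calc ε / (2 * (1 + lam)) < ε / 1 := by
          apply div_lt_div_of_pos_left hε one_pos
          nlinarith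
      _ = ε := by ring
  have hzE : z ∈ closure E := hsub (Metric.mem_ball_self hε)
  rcases Metric.mem_closure_iff.mp hzE δ hδ with ⟨x, hxE, hxz⟩
  rcases hE x hxE δ hδ with ⟨y, hyx, hyne, hhole⟩
  have hdxy : 0 < dist x y := dist_pos.mpr (fun h => hyne h.symm)
  have hrad : 0 < lam * dist x y := mul_pos hlam hdxy
  -- the hole ball is contained in `ball z ε`
  have hdxyδ : dist x y < δ := by rw [dist_comm]; exact Metric.mem_ball.mp hyx
  have hholesub : Metric.ball y (lam * dist x y) ⊆ Metric.ball z ε := by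
    intro w hw
    have hw' : dist w y < lam * dist x y := Metric.mem_ball.mp hw
    have : dist w z ≤ dist w y + dist y x + dist x z := dist_triangle4 w y x z
    have h1 : dist y x < δ := Metric.mem_ball.mp hyx
    have h2 : lam * dist x y < lam * δ := (mul_lt_mul_iff_right₀ hlam).mpr hdxyδ
    have hxz' : dist x z < δ := by rwa [dist_comm]
    have hwz : dist w z < lam * δ + δ + δ := by nlinarith [hw', h1, hxz']
    have hfin : δ * (lam + 2) ≤ ε := by
      rw [hδdef, div_mul_eq_mul_div, div_le_iff₀ (by positivity)]
      nlinarith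
    refine Metric.mem_ball.mpr (lt_of_lt_of_le hwz ?_)
    nlinarith
  -- but then a nonempty ball inside `closure E` misses `E`: contradiction
  rcases Metric.mem_closure_iff.mp (hsub (hholesub (Metric.mem_ball_self hrad)))
      (lam * dist x y) hrad with ⟨w, hwE, hwy⟩
  have : w ∈ Metric.ball y (lam * dist x y) ∩ E := ⟨Metric.mem_ball.mpr (by rwa [dist_comm]), hwE⟩
  rw [hhole] at this
  exact this

/-- A `σ`-porous set in a metric space is meagre. -/
lemma SigmaPorous.isMeagre {X : Type*} [MetricSpace X] {E : Set X}
    (hE : SigmaPorous E) : IsMeagre E := by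
  rcases hE with ⟨S, hS, rfl⟩
  apply isMeagre_iUnion
  intro n
  rcases hS n with ⟨lam, hlam0, _, hp⟩
  have hnd : IsNowhereDense (S n) := hp.isNowhereDense hlam0
  rw [isMeagre_iff_countable_union_isNowhereDense]
  exact ⟨{S n}, by simpa using hnd, Set.countable_singleton _, by simp⟩

/-- For a Radon measure on a locally compact Hausdorff space, the set
`{f ∈ L^∞ : |f| ≥ |g| a.e.}` is not `σ`-porous in `L^∞(Ω,μ)`. -/
theorem stmt_4 {Ω : Type*} [TopologicalSpace Ω] [T2Space Ω] [LocallyCompactSpace Ω]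
    [MeasurableSpace Ω] [BorelSpace Ω] (μ : Measure Ω) [μ.Regular]
    (g : Lp ℂ ⊤ μ) :
    ¬ SigmaPorous {f : Lp ℂ ⊤ μ | ∀ᵐ x ∂μ, ‖g x‖ ≤ ‖f x‖} := by
  intro hσ
  have hmeagre : IsMeagre {f : Lp ℂ ⊤ μ | ∀ᵐ x ∂μ, ‖g x‖ ≤ ‖f x‖} := hσ.isMeagre
  -- build `f₀` with `‖f₀ x‖ = ‖g x‖ + 1` a.e.
  set u : ℂ → ℂ := fun z => if z = 0 then 1 else z + z / (‖z‖ : ℂ) with hu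
  have hnormu : ∀ z : ℂ, ‖u z‖ = ‖z‖ + 1 := by
    intro z
    by_cases hz : z = 0
    · simp [hu, hz]
    · have hz' : (‖z‖ : ℝ) ≠ 0 := norm_ne_zero_iff.mpr hz
      simp only [hu, if_neg hz]
      have : z + z / (‖z‖ : ℂ) = z * (1 + 1 / (‖z‖ : ℂ)) := by ring
      rw [this, norm_mul]
      have h1 : ‖(1 : ℂ) + 1 / (‖z‖ : ℂ)‖ = 1 + 1 / ‖z‖ := by
        have : (1 : ℂ) + 1 / (‖z‖ : ℂ) = ((1 + 1 / ‖z‖ : ℝ) : ℂ) := by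
          push_cast; ring
        rw [this, Complex.norm_real, Real.norm_of_nonneg (by positivity)]
      rw [h1]
      have hz'' : ‖z‖ ≠ 0 := hz'
      field_simp
  have humeas : Measurable u := by
    apply Measurable.ite (measurableSet_eq_fun measurable_id measurable_const)
      measurable_const
    exact (measurable_id.add ((measurable_id.div (Complex.measurable_ofReal.comp
      measurable_norm))))
  set φ : Ω → ℂ := fun x => u (g x) with hφ
  have hφmeas : AEStronglyMeasurable φ μ :=
    (humeas.comp_aemeasurable (Lp.aestronglyMeasurable g).aemeasurable).aestronglyMeasurable
  have hgbd : ∀ᵐ x ∂μ, ‖g x‖ ≤ ‖g‖ := by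
    have h := enorm_ae_le_eLpNormEssSup (fun x => g x) μ
    have hle : eLpNormEssSup (fun x => g x) μ = eLpNorm (fun x => g x) ⊤ μ := by
      rw [eLpNorm_exponent_top]
    filter_upwards [h] with x hx
    rw [hle] at hx
    have hlt : eLpNorm (fun x => g x) ⊤ μ < ⊤ := Lp.eLpNorm_lt_top g
    have := ENNReal.toReal_mono hlt.ne hx
    simpa [Lp.norm_def, coe_nnnorm] using this
  have hφmem : MemLp φ ⊤ μ := by
    refine memLp_top_of_bound hφmeas (‖g‖ + 1) ?_
    filter_upwards [hgbd] with x hx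
    rw [hφ, hnormu]
    linarith
  set f₀ : Lp ℂ ⊤ μ := hφmem.toLp φ with hf₀
  have hf₀ae : (f₀ : Ω → ℂ) =ᵐ[μ] φ := MemLp.coeFn_toLp hφmem
  -- the ball of radius 1 around f₀ is contained in the set
  have hball : Metric.ball f₀ 1 ⊆ {f : Lp ℂ ⊤ μ | ∀ᵐ x ∂μ, ‖g x‖ ≤ ‖f x‖} := by
    intro h hh
    have hd : ‖h - f₀‖ < 1 := by
      rw [← dist_eq_norm]; exact Metric.mem_ball.mp hh
    have hdE : eLpNorm (fun x => (h - f₀ : Lp ℂ ⊤ μ) x) ⊤ μ < 1 := by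
      have hlt : eLpNorm (fun x => (h - f₀ : Lp ℂ ⊤ μ) x) ⊤ μ < ⊤ :=
        Lp.eLpNorm_lt_top (h - f₀)
      rw [show (1 : ℝ≥0∞) = ENNReal.ofReal 1 by simp]
      rw [← ENNReal.ofReal_toReal hlt.ne]
      exact (ENNReal.ofReal_lt_ofReal_iff one_pos).mpr (by simpa [Lp.norm_def] using hd)
    have hptwise : ∀ᵐ x ∂μ, ‖(h - f₀ : Lp ℂ ⊤ μ) x‖ < 1 := by
      have h1 := enorm_ae_le_eLpNormEssSup (fun x => (h - f₀ : Lp ℂ ⊤ μ) x) μ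
      filter_upwards [h1] with x hx
      have : (‖(h - f₀ : Lp ℂ ⊤ μ) x‖₊ : ℝ≥0∞) < 1 := by
        refine lt_of_le_of_lt hx ?_
        rwa [← eLpNorm_exponent_top]
      have := ENNReal.toReal_strict_mono (by simp) this
      simpa [coe_nnnorm] using this
    filter_upwards [hptwise, Lp.coeFn_sub h f₀, hf₀ae] with x hx hsub hf₀x
    rw [hsub] at hx
    simp only [Pi.sub_apply] at hx
    have : ‖f₀ x‖ = ‖g x‖ + 1 := by rw [hf₀x, hφ, hnormu]
    have hge : ‖f₀ x‖ - ‖h x - f₀ x‖ ≤ ‖h x‖ := by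
      have := norm_sub_norm_le (f₀ x) (h x)
      have h2 : ‖f₀ x - h x‖ = ‖h x - f₀ x‖ := norm_sub_rev _ _
      linarith [abs_le.mp (abs_norm_sub_norm_le (f₀ x) (h x))]
    have hlt : ‖h x - f₀ x‖ < 1 := hx
    linarith
  -- a meagre set cannot contain a nonempty open ball in a complete space
  have hdense : Dense ({f : Lp ℂ ⊤ μ | ∀ᵐ x ∂μ, ‖g x‖ ≤ ‖f x‖}ᶜ) :=
    dense_of_mem_residual hmeagre
  rcases hdense.exists_mem_open Metric.isOpen_ball ⟨f₀, Metric.mem_ball_self one_pos⟩ with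
    ⟨w, hw, hwball⟩
  exact hw (hball hwball)
end

section
/- Let $p\geq 1$ and $\tau$ be Lebesgue measure on $\mathbb{R}$. For $g\in L^p(\mathbb{R},\tau)$ define $\Theta_g=\{f\in L^p(\mathbb{R},\tau): \|f\chi_{[m,m+1]}\|_p\geq\|g\chi_{[m,m+1]}\|_p \text{ for all } m\in\mathbb{Z}\}$. Then $\Theta_g$ is not $\sigma$-porous in $L^p(\mathbb{R},\tau)$. -/
open MeasureTheory Metric Set ENNReal

noncomputable section
namespace Stmt5Aux

variable (p : ℝ≥0∞)

/-- windowed norm on `[m, m+1]` -/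
def Nc (m : ℤ) (f : ℝ → ℂ) : ℝ≥0∞ :=
  eLpNorm ((Set.Icc (m : ℝ) ((m : ℝ) + 1)).indicator f) p volume

variable {p}

lemma hq_pos (hp1 : 1 ≤ p) (hpt : p ≠ ⊤) : 0 < p.toReal :=
  ENNReal.toReal_pos (by intro h; rw [h] at hp1; exact absurd hp1 (by simp)) hpt

lemma hq_one_le (hp1 : 1 ≤ p) (hpt : p ≠ ⊤) : 1 ≤ p.toReal := by
  rw [← ENNReal.toReal_one]
  exact ENNReal.toReal_mono hpt hp1

lemma hp_ne_zero (hp1 : 1 ≤ p) : p ≠ 0 := by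
  intro h; rw [h] at hp1; exact absurd hp1 (by simp)

lemma Nc_pow_eq (hp1 : 1 ≤ p) (hpt : p ≠ ⊤) (m : ℤ) (f : ℝ → ℂ) :
    (Nc p m f) ^ p.toReal = ∫⁻ t in Set.Icc (m : ℝ) ((m : ℝ) + 1), (‖f t‖₊ : ℝ≥0∞) ^ p.toReal := by
  have hq0 : 0 < p.toReal := hq_pos hp1 hpt
  rw [Nc, eLpNorm_eq_lintegral_rpow_enorm_toReal (hp_ne_zero hp1) hpt, one_div,
    ← ENNReal.rpow_mul, inv_mul_cancel₀ hq0.ne', ENNReal.rpow_one]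
  simp only [enorm_eq_nnnorm]
  have hpt2 : ∀ t : ℝ, (‖(Set.Icc (m : ℝ) ((m : ℝ) + 1)).indicator f t‖₊ : ℝ≥0∞) ^ p.toReal
      = (Set.Icc (m : ℝ) ((m : ℝ) + 1)).indicator (fun t => (‖f t‖₊ : ℝ≥0∞) ^ p.toReal) t := by
    intro t
    by_cases ht : t ∈ Set.Icc (m : ℝ) ((m : ℝ) + 1)
    · simp [Set.indicator_of_mem ht]
    · simp [Set.indicator_of_notMem ht, ENNReal.zero_rpow_of_pos hq0]
  simp_rw [hpt2]
  rw [lintegral_indicator measurableSet_Icc]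

lemma pairwise_disjoint_Ico :
    Pairwise (Function.onFun Disjoint (fun m : ℤ => Set.Ico (m : ℝ) ((m : ℝ) + 1))) := by
  intro m n hmn
  simp only [Function.onFun]
  rw [Set.disjoint_left]
  rintro t ⟨h1, h2⟩ ⟨h3, h4⟩
  have hm : ⌊t⌋ = m := by
    rw [Int.floor_eq_iff]
    exact ⟨h1, by exact_mod_cast h2⟩
  have hn : ⌊t⌋ = n := by
    rw [Int.floor_eq_iff]
    exact ⟨h3, by exact_mod_cast h4⟩
  exact hmn (hm ▸ hn)

/-- decomposition of the `p`-th power of the norm over integer windows -/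
lemma decomp (hp1 : 1 ≤ p) (hpt : p ≠ ⊤) (f : ℝ → ℂ) :
    (eLpNorm f p volume) ^ p.toReal = ∑' m : ℤ, (Nc p m f) ^ p.toReal := by
  have hq0 : 0 < p.toReal := hq_pos hp1 hpt
  rw [eLpNorm_eq_lintegral_rpow_enorm_toReal (hp_ne_zero hp1) hpt, one_div,
    ← ENNReal.rpow_mul, inv_mul_cancel₀ hq0.ne', ENNReal.rpow_one]
  simp only [enorm_eq_nnnorm]
  have h1 : ∫⁻ t, (‖f t‖₊ : ℝ≥0∞) ^ p.toReal ∂volume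
      = ∫⁻ t in ⋃ m : ℤ, Set.Ico (m : ℝ) ((m : ℝ) + 1), (‖f t‖₊ : ℝ≥0∞) ^ p.toReal ∂volume := by
    rw [iUnion_Ico_intCast, Measure.restrict_univ]
  rw [h1, lintegral_iUnion (fun m => measurableSet_Ico) pairwise_disjoint_Ico]
  congr 1
  funext m
  rw [Nc_pow_eq hp1 hpt]
  exact setLIntegral_congr Ico_ae_eq_Icc

lemma tsum_Nc_pow_le (hp1 : 1 ≤ p) (hpt : p ≠ ⊤) (T : Set ℤ) (f : ℝ → ℂ) :
    ∑' m : T, (Nc p m f) ^ p.toReal ≤ (eLpNorm f p volume) ^ p.toReal := by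
  rw [decomp hp1 hpt]
  refine le_trans (le_of_eq (tsum_subtype T (fun m => (Nc p m f) ^ p.toReal))) ?_
  exact ENNReal.tsum_le_tsum (fun m => Set.indicator_le_self _ _ m)

lemma Nc_le_eLpNorm (m : ℤ) (f : ℝ → ℂ) : Nc p m f ≤ eLpNorm f p volume :=
  eLpNorm_indicator_le f

lemma Nc_congr {m : ℤ} {f g : ℝ → ℂ} (h : f =ᵐ[volume] g) : Nc p m f = Nc p m g :=
  eLpNorm_congr_ae (h.indicator)

lemma Nc_add_le (hp1 : 1 ≤ p) {m : ℤ} {f g : ℝ → ℂ}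
    (hf : AEStronglyMeasurable f volume) (hg : AEStronglyMeasurable g volume) :
    Nc p m (f + g) ≤ Nc p m f + Nc p m g := by
  have : (Set.Icc (m : ℝ) ((m : ℝ) + 1)).indicator (f + g)
      = (Set.Icc (m : ℝ) ((m : ℝ) + 1)).indicator f
        + (Set.Icc (m : ℝ) ((m : ℝ) + 1)).indicator g := Set.indicator_add _ _ _
  rw [Nc, this]
  exact eLpNorm_add_le (hf.indicator measurableSet_Icc) (hg.indicator measurableSet_Icc) hp1



variable [Fact (1 ≤ p)]

-- Lp level
lemma NcL_ne_top (m : ℤ) (x : Lp ℂ p (volume : Measure ℝ)) : Nc p m ⇑x ≠ ⊤ :=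
  fun h => (Lp.eLpNorm_ne_top x) (top_le_iff.mp (h ▸ Nc_le_eLpNorm m ⇑x))

lemma NcL_le_add_edist (hp1 : 1 ≤ p) (m : ℤ) (x y : Lp ℂ p (volume : Measure ℝ)) :
    Nc p m ⇑x ≤ Nc p m ⇑y + edist x y := by
  have h1 : ⇑x =ᵐ[volume] (⇑y + (⇑x - ⇑y)) := by
    filter_upwards with t
    simp
  calc Nc p m ⇑x = Nc p m (⇑y + (⇑x - ⇑y)) := Nc_congr h1
    _ ≤ Nc p m ⇑y + Nc p m (⇑x - ⇑y) :=
        Nc_add_le hp1 (Lp.aestronglyMeasurable y)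
          ((Lp.aestronglyMeasurable x).sub (Lp.aestronglyMeasurable y))
    _ ≤ Nc p m ⇑y + eLpNorm (⇑x - ⇑y) p volume := by
        exact add_le_add_right (Nc_le_eLpNorm m _) _
    _ = Nc p m ⇑y + edist x y := by rw [Lp.edist_def]

/-- the constraint set -/
def Th (p : ℝ≥0∞) (β : ℤ → ℝ≥0∞) : Set (Lp ℂ p (volume : Measure ℝ)) :=
  {x | ∀ m, β m ≤ Nc p m ⇑x}

lemma Th_mono {β β' : ℤ → ℝ≥0∞} (h : ∀ m, β m ≤ β' m) : Th p β' ⊆ Th p β :=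
  fun x hx m => le_trans (h m) (hx m)

lemma isClosed_Th (hp1 : 1 ≤ p) (β : ℤ → ℝ≥0∞) : IsClosed (Th p β) := by
  have : Th p β = ⋂ m : ℤ, {x : Lp ℂ p (volume : Measure ℝ) | β m ≤ Nc p m ⇑x} := by
    ext x; simp [Th, Set.mem_iInter]
  rw [this]
  refine isClosed_iInter (fun m => ?_)
  rw [← isOpen_compl_iff]
  rw [Metric.isOpen_iff]
  intro x hx
  simp only [Set.mem_compl_iff, Set.mem_setOf_eq, not_le] at hx
  by_cases hβ : β m = ⊤
  · refine ⟨1, one_pos, fun y _ => ?_⟩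
    simp only [Set.mem_compl_iff, Set.mem_setOf_eq, not_le, hβ]
    exact lt_top_iff_ne_top.mpr (NcL_ne_top m y)
  · have hst : β m - Nc p m ⇑x ≠ ⊤ :=
      (lt_of_le_of_lt tsub_le_self (lt_top_iff_ne_top.mpr hβ)).ne
    have hs0 : β m - Nc p m ⇑x ≠ 0 := by
      simpa [tsub_eq_zero_iff_le] using hx.not_ge
    have hpos : 0 < (β m - Nc p m ⇑x).toReal := ENNReal.toReal_pos hs0 hst
    refine ⟨(β m - Nc p m ⇑x).toReal, hpos, fun y hy => ?_⟩
    simp only [Set.mem_compl_iff, Set.mem_setOf_eq, not_le]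
    have h2 : edist y x < β m - Nc p m ⇑x := by
      rw [edist_dist]
      calc ENNReal.ofReal (dist y x) < ENNReal.ofReal (β m - Nc p m ⇑x).toReal := by
            rw [ENNReal.ofReal_lt_ofReal_iff hpos]
            exact hy
        _ = β m - Nc p m ⇑x := ENNReal.ofReal_toReal hst
    calc Nc p m ⇑y ≤ Nc p m ⇑x + edist y x := NcL_le_add_edist hp1 m y x
        _ < Nc p m ⇑x + (β m - Nc p m ⇑x) :=
            (ENNReal.add_lt_add_left (NcL_ne_top m x) h2)
        _ = β m := add_tsub_cancel_of_le hx.le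



lemma exists_adjust (hpt : p ≠ ⊤) (y : Lp ℂ p (volume : Measure ℝ)) (T : Set ℤ)
    (target : ℤ → ℝ≥0∞)
    (hub : ∀ m ∈ T, Nc p m ⇑y ≤ target m) (hfin : ∀ m ∈ T, target m ≠ ⊤)
    (hsum : ∑' m : T, (target m - Nc p m ⇑y) ^ p.toReal ≠ ⊤) :
    ∃ z : Lp ℂ p (volume : Measure ℝ),
      (∀ m ∈ T, Nc p m ⇑z = target m) ∧ (∀ m ∉ T, Nc p m ⇑z = Nc p m ⇑y) ∧
      edist z y ^ p.toReal ≤ ∑' m : T, (target m - Nc p m ⇑y) ^ p.toReal := by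
  classical
  have hp1 : 1 ≤ p := Fact.out
  have hp0 : p ≠ 0 := hp_ne_zero hp1
  have hq0 : 0 < p.toReal := hq_pos hp1 hpt
  set cf : ℤ → ℂ := fun m =>
    if m ∈ T ∧ Nc p m ⇑y ≠ 0 then (((target m / Nc p m ⇑y).toReal : ℝ) : ℂ) else 1 with hcfdef
  set cc : ℤ → ℂ := fun m =>
    if m ∈ T ∧ Nc p m ⇑y = 0 then (((target m).toReal : ℝ) : ℂ) else 0 with hccdef
  set w : ℝ → ℂ := fun t => (cf ⌊t⌋ - 1) * (⇑y t) + cc ⌊t⌋ with hwdef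
  -- a.e. floor identification on each window
  have hfloor : ∀ m : ℤ, ∀ᵐ t ∂(volume : Measure ℝ),
      t ∈ Set.Icc (m : ℝ) ((m : ℝ) + 1) → ⌊t⌋ = m := by
    intro m
    have hset : {t : ℝ | ¬ t ≠ ((m : ℝ) + 1)} = {((m : ℝ) + 1)} := by ext t; simp
    have h1 : ∀ᵐ t ∂(volume : Measure ℝ), t ≠ ((m : ℝ) + 1) := by
      rw [ae_iff, hset]; exact measure_singleton _
    filter_upwards [h1] with t ht hmem
    rcases eq_or_lt_of_le hmem.2 with he | hlt
    · exact absurd he ht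
    · rw [Int.floor_eq_iff]
      refine ⟨hmem.1, ?_⟩
      push_cast
      exact hlt
  have hrepl : ∀ (m : ℤ) (A B : ℤ → ℂ),
      (Set.Icc (m : ℝ) ((m : ℝ) + 1)).indicator (fun t => A ⌊t⌋ * (⇑y t) + B ⌊t⌋)
        =ᵐ[volume] (Set.Icc (m : ℝ) ((m : ℝ) + 1)).indicator (fun t => A m * (⇑y t) + B m) := by
    intro m A B
    filter_upwards [hfloor m] with t ht
    by_cases hmem : t ∈ Set.Icc (m : ℝ) ((m : ℝ) + 1)
    · rw [Set.indicator_of_mem hmem, Set.indicator_of_mem hmem, ht hmem]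
    · rw [Set.indicator_of_notMem hmem, Set.indicator_of_notMem hmem]
  have hNadd : ∀ m : ℤ,
      Nc p m (⇑y + w) = Nc p m (fun t => cf m * (⇑y t) + cc m) := by
    intro m
    have h1 : (⇑y + w) = (fun t => cf ⌊t⌋ * (⇑y t) + cc ⌊t⌋) := by
      funext t
      show ⇑y t + ((cf ⌊t⌋ - 1) * (⇑y t) + cc ⌊t⌋) = _
      ring
    rw [h1]
    exact eLpNorm_congr_ae (hrepl m cf cc)
  have hNw : ∀ m : ℤ,
      Nc p m w = Nc p m (fun t => (cf m - 1) * (⇑y t) + cc m) := by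
    intro m
    exact eLpNorm_congr_ae (hrepl m (fun k => cf k - 1) cc)
  -- windowed norm of a constant
  have hNconst : ∀ (m : ℤ) (c : ℂ), Nc p m (fun _ => c) = (‖c‖₊ : ℝ≥0∞) := by
    intro m c
    rw [Nc, eLpNorm_indicator_const measurableSet_Icc hp0 hpt, Real.volume_Icc]
    norm_num
    rfl
  -- windowed norm of a multiple of y
  have hNsmul : ∀ (m : ℤ) (c : ℂ), Nc p m (fun t => c * (⇑y t)) = (‖c‖₊ : ℝ≥0∞) * Nc p m ⇑y := by
    intro m c
    have h1 : (Set.Icc (m : ℝ) ((m : ℝ) + 1)).indicator (fun t => c * (⇑y t))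
        = c • (Set.Icc (m : ℝ) ((m : ℝ) + 1)).indicator ⇑y := by
      funext t
      simp [Set.indicator_const_mul]
    rw [Nc, h1, eLpNorm_const_smul, Nc]
    rfl
  -- the main case computations
  have hmainT : ∀ m ∈ T, Nc p m (⇑y + w) = target m ∧ Nc p m w = target m - Nc p m ⇑y := by
    intro m hmT
    by_cases h0 : Nc p m ⇑y = 0
    · have hcf : cf m = 1 := by simp [hcfdef, h0]
      have hcc : cc m = (((target m).toReal : ℝ) : ℂ) := by simp [hccdef, hmT, h0]
      have hy0 : (Set.Icc (m : ℝ) ((m : ℝ) + 1)).indicator ⇑y =ᵐ[volume] 0 :=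
        (eLpNorm_eq_zero_iff ((Lp.aestronglyMeasurable y).indicator measurableSet_Icc) hp0).mp h0
      have hcongr : ∀ c : ℂ, (Set.Icc (m : ℝ) ((m : ℝ) + 1)).indicator (fun t => 1 * (⇑y t) + c)
          =ᵐ[volume] (Set.Icc (m : ℝ) ((m : ℝ) + 1)).indicator (fun _ => c) := by
        intro c
        have hsplit : (Set.Icc (m : ℝ) ((m : ℝ) + 1)).indicator (fun t => 1 * (⇑y t) + c)
            = (Set.Icc (m : ℝ) ((m : ℝ) + 1)).indicator ⇑y
              + (Set.Icc (m : ℝ) ((m : ℝ) + 1)).indicator (fun _ => c) := by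
          funext t
          by_cases ht : t ∈ Set.Icc (m : ℝ) ((m : ℝ) + 1)
          · simp [Set.indicator_of_mem ht]
          · simp [Set.indicator_of_notMem ht]
        rw [hsplit]
        filter_upwards [hy0] with t ht
        simp only [Pi.add_apply, ht, Pi.zero_apply, zero_add]
      have htv : (‖(((target m).toReal : ℝ) : ℂ)‖₊ : ℝ≥0∞) = target m := by
        rw [Complex.nnnorm_real, ← enorm_eq_nnnorm, Real.enorm_eq_ofReal ENNReal.toReal_nonneg,
          ENNReal.ofReal_toReal (hfin m hmT)]
      constructor
      · rw [hNadd m, hcf, hcc, Nc, eLpNorm_congr_ae (hcongr _), ← Nc, hNconst, htv]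
      · have hcf1 : cf m - 1 = 0 := by rw [hcf]; ring
        have h2 : (fun t => (cf m - 1) * (⇑y t) + cc m) = fun _ => cc m := by
          funext t; rw [hcf1]; ring
        rw [hNw m, h2, hcc, hNconst, htv, h0, tsub_zero]
    · have hNfin : Nc p m ⇑y ≠ ⊤ := NcL_ne_top m y
      have hdivfin : target m / Nc p m ⇑y ≠ ⊤ :=
        (ENNReal.div_lt_top (hfin m hmT) h0).ne
      have hcf : cf m = (((target m / Nc p m ⇑y).toReal : ℝ) : ℂ) := by
        simp [hcfdef, hmT, h0]
      have hcc : cc m = 0 := by simp [hccdef, h0]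
      have hdiv1 : (1 : ℝ≥0∞) ≤ target m / Nc p m ⇑y := by
        rw [ENNReal.le_div_iff_mul_le (Or.inl h0) (Or.inl hNfin), one_mul]
        exact hub m hmT
      have hge1 : 1 ≤ (target m / Nc p m ⇑y).toReal := by
        rw [← ENNReal.toReal_one]
        exact ENNReal.toReal_mono hdivfin hdiv1
      have hofr : ENNReal.ofReal ((target m / Nc p m ⇑y).toReal) = target m / Nc p m ⇑y :=
        ENNReal.ofReal_toReal hdivfin
      constructor
      · have h2 : (fun t => cf m * (⇑y t) + cc m) = fun t => cf m * (⇑y t) := by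
          funext t; rw [hcc]; ring
        rw [hNadd m, h2, hNsmul, hcf, Complex.nnnorm_real, ← enorm_eq_nnnorm,
          Real.enorm_eq_ofReal (le_trans zero_le_one hge1), hofr,
          ENNReal.div_mul_cancel h0 hNfin]
      · have h2 : (fun t => (cf m - 1) * (⇑y t) + cc m) = fun t => (cf m - 1) * (⇑y t) := by
          funext t; rw [hcc]; ring
        have h3 : cf m - 1 = ((((target m / Nc p m ⇑y).toReal - 1 : ℝ)) : ℂ) := by
          rw [hcf]; push_cast; ring
        rw [hNw m, h2, hNsmul, h3, Complex.nnnorm_real, ← enorm_eq_nnnorm,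
          Real.enorm_eq_ofReal (by linarith), ENNReal.ofReal_sub _ zero_le_one,
          ENNReal.ofReal_one, hofr, ENNReal.sub_mul (fun _ _ => hNfin),
          ENNReal.div_mul_cancel h0 hNfin, one_mul]
  have hmainN : ∀ m ∉ T, Nc p m (⇑y + w) = Nc p m ⇑y ∧ Nc p m w = 0 := by
    intro m hmN
    have hcf : cf m = 1 := by
      simp only [hcfdef]
      rw [if_neg (fun h => hmN h.1)]
    have hcc : cc m = 0 := by
      simp only [hccdef]
      rw [if_neg (fun h => hmN h.1)]
    constructor
    · have h2 : (fun t => cf m * (⇑y t) + cc m) = ⇑y := by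
        funext t; rw [hcf, hcc]; ring
      rw [hNadd m, h2]
    · have h2 : (fun t => (cf m - 1) * (⇑y t) + cc m) = fun _ => (0 : ℂ) := by
        funext t; rw [hcf, hcc]; ring
      rw [hNw m, h2]
      have h3 : (fun _ : ℝ => (0 : ℂ)) = (0 : ℝ → ℂ) := rfl
      rw [h3, Nc]
      simp
  -- total cost
  have hsum_w : ∑' m : ℤ, Nc p m w ^ p.toReal
      = ∑' m : T, (target m - Nc p m ⇑y) ^ p.toReal := by
    rw [tsum_subtype T (fun m => (target m - Nc p m ⇑y) ^ p.toReal)]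
    apply tsum_congr
    intro m
    by_cases hmT : m ∈ T
    · rw [Set.indicator_of_mem hmT, (hmainT m hmT).2]
    · rw [Set.indicator_of_notMem hmT, (hmainN m hmT).2, ENNReal.zero_rpow_of_pos hq0]
  -- membership in Lp
  have hA : Measurable (fun t : ℝ => cf ⌊t⌋ - 1) :=
    (measurable_from_top : Measurable (fun m : ℤ => cf m - 1)).comp Int.measurable_floor
  have hB : Measurable (fun t : ℝ => cc ⌊t⌋) :=
    (measurable_from_top : Measurable cc).comp Int.measurable_floor
  have haesm : AEStronglyMeasurable w volume :=
    (hA.aestronglyMeasurable.mul (Lp.aestronglyMeasurable y)).add hB.aestronglyMeasurable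
  have hwlt : eLpNorm w p volume ≠ ⊤ := by
    intro h
    apply hsum
    rw [← hsum_w, ← decomp hp1 hpt, h]
    exact ENNReal.top_rpow_of_pos hq0
  have hw : MemLp w p volume := ⟨haesm, lt_top_iff_ne_top.mpr hwlt⟩
  refine ⟨y + hw.toLp w, ?_, ?_, ?_⟩
  all_goals {
    have hz : ⇑(y + hw.toLp w) =ᵐ[volume] ⇑y + w := by
      filter_upwards [Lp.coeFn_add y (hw.toLp w), hw.coeFn_toLp] with t h1 h2
      rw [h1]
      simp [h2]
    first
    | exact fun m hmT => (Nc_congr hz).trans ((hmainT m hmT).1)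
    | exact fun m hmN => (Nc_congr hz).trans ((hmainN m hmN).1)
    | { have hed : edist (y + hw.toLp w) y = eLpNorm w p volume := by
          rw [Lp.edist_def]
          apply eLpNorm_congr_ae
          filter_upwards [hz] with t ht
          rw [Pi.sub_apply, ht]
          simp
        rw [hed]
        exact le_of_eq ((decomp hp1 hpt w).trans hsum_w) }
  }

lemma NcL_le_add_sub (hp1 : 1 ≤ p) (m : ℤ) (x y : Lp ℂ p (volume : Measure ℝ)) :
    Nc p m ⇑x ≤ Nc p m ⇑y + Nc p m (⇑x - ⇑y) := by
  have h1 : ⇑x =ᵐ[volume] (⇑y + (⇑x - ⇑y)) := by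
    filter_upwards with t
    simp
  calc Nc p m ⇑x = Nc p m (⇑y + (⇑x - ⇑y)) := Nc_congr h1
    _ ≤ Nc p m ⇑y + Nc p m (⇑x - ⇑y) :=
        Nc_add_le hp1 (Lp.aestronglyMeasurable y)
          ((Lp.aestronglyMeasurable x).sub (Lp.aestronglyMeasurable y))

lemma dist_le_of_edist_le {X : Type*} [PseudoMetricSpace X] {x y : X} {c : ℝ} (hc : 0 ≤ c)
    (h : edist x y ≤ ENNReal.ofReal c) : dist x y ≤ c := by
  rw [edist_dist] at h
  exact (ENNReal.ofReal_le_ofReal_iff hc).mp h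

lemma exists_tail (f : ℤ → ℝ≥0∞) (hf : ∑' m, f m ≠ ⊤) {ε : ℝ≥0∞} (hε : 0 < ε) :
    ∃ s : Finset ℤ, ∑' m : {x : ℤ // x ∉ s}, f m < ε := by
  have h := ENNReal.tendsto_tsum_compl_atTop_zero hf
  have h2 : ∀ᶠ s : Finset ℤ in Filter.atTop, ∑' m : {x : ℤ // x ∉ s}, f m ∈ Set.Iio ε :=
    h (isOpen_Iio.mem_nhds hε)
  exact h2.exists

lemma beta_fin {β : ℤ → ℝ≥0∞} (hq0 : 0 < p.toReal)
    (h : ∑' m, β m ^ p.toReal ≠ ⊤) : ∀ m, β m ≠ ⊤ := by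
  intro m hm
  apply h
  rw [eq_top_iff]
  calc (⊤ : ℝ≥0∞) = β m ^ p.toReal := by rw [hm, ENNReal.top_rpow_of_pos hq0]
    _ ≤ ∑' m, β m ^ p.toReal := ENNReal.le_tsum m


lemma tsum_set_le (A : Set ℤ) (f : ℤ → ℝ≥0∞) : ∑' m : A, f m ≤ ∑' m, f m := by
  rw [tsum_subtype A f]
  exact ENNReal.tsum_le_tsum (fun m => Set.indicator_le_self _ _ m)

/-- Goodness of a stage of the construction -/
def GoodSt (p : ℝ≥0∞) (β : ℤ → ℝ≥0∞) (v : Lp ℂ p (volume : Measure ℝ)) (r : ℝ) : Prop :=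
  (∑' m, (β m) ^ p.toReal ≠ ⊤) ∧ (v ∈ Th p β) ∧ 0 < r

lemma step (hpt : p ≠ ⊤) {β : ℤ → ℝ≥0∞} {v : Lp ℂ p (volume : Measure ℝ)} {r : ℝ}
    (hst : GoodSt p β v r) {lam : ℝ} (hl0 : 0 < lam) (hl1 : lam < 1)
    {S : Set (Lp ℂ p (volume : Measure ℝ))} (hS : Porous lam S) :
    ∃ (β' : ℤ → ℝ≥0∞) (v' : Lp ℂ p (volume : Measure ℝ)) (r' : ℝ),
      GoodSt p β' v' r' ∧ (∀ m, β m ≤ β' m) ∧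
      closedBall v' r' ⊆ closedBall v r ∧ r' ≤ r / 2 ∧ dist v' v ≤ r ∧
      (Th p β' ∩ closedBall v' r') ∩ S = ∅ := by
  classical
  have hp1 : 1 ≤ p := Fact.out
  have hp0 : p ≠ 0 := hp_ne_zero hp1
  have hq0 : 0 < p.toReal := hq_pos hp1 hpt
  have hq1 : 1 ≤ p.toReal := hq_one_le hp1 hpt
  obtain ⟨hβsum, hvTh, hr⟩ := hst
  have hβfin : ∀ m, β m ≠ ⊤ := beta_fin hq0 hβsum
  by_cases hcase : ∃ x, x ∈ Th p β ∧ dist x v < r ∧ x ∉ closure S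
  · -- easy case: somewhere in the current window we are away from the closure of S
    obtain ⟨x, hxTh, hxv, hxS⟩ := hcase
    obtain ⟨ρ, hρ0, hρball⟩ : ∃ ρ > 0, ball x ρ ⊆ (closure S)ᶜ :=
      Metric.mem_nhds_iff.mp ((isClosed_closure.isOpen_compl).mem_nhds hxS)
    refine ⟨β, x, min (min (ρ / 2) ((r - dist x v) / 2)) (r / 2),
      ⟨hβsum, hxTh, ?_⟩, fun m => le_rfl, ?_, min_le_right _ _, hxv.le, ?_⟩
    · have h1 : 0 < ρ / 2 := by linarith
      have h2 : 0 < (r - dist x v) / 2 := by linarith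
      have h3 : 0 < r / 2 := by linarith
      exact lt_min (lt_min h1 h2) h3
    · intro z hz
      simp only [mem_closedBall] at hz ⊢
      have h1 : dist z x ≤ (r - dist x v) / 2 :=
        le_trans hz (le_trans (min_le_left _ _) (min_le_right _ _))
      calc dist z v ≤ dist z x + dist x v := dist_triangle _ _ _
        _ ≤ (r - dist x v) / 2 + dist x v := by linarith
        _ ≤ r := by
            have := dist_nonneg (x := x) (y := v)
            linarith
    · rw [Set.eq_empty_iff_forall_notMem]
      rintro z ⟨⟨_, hzball⟩, hzS⟩
      have h1 : dist z x < ρ := by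
        have := le_trans (mem_closedBall.mp hzball) (le_trans (min_le_left _ _) (min_le_left _ _))
        linarith
      exact (hρball (mem_ball.mpr h1)) (subset_closure hzS)
  · -- hard case: S is dense in the current window; build a trap
    push_neg at hcase
    -- choose the tail
    set c2 : ℝ≥0∞ := ENNReal.ofReal (2 / lam) with hc2def
    have hc2ne0 : c2 ≠ 0 := by
      simp only [hc2def, ne_eq, ENNReal.ofReal_eq_zero, not_le]
      positivity
    have hc2fin : c2 ≠ ⊤ := ENNReal.ofReal_ne_top
    set R100 : ℝ≥0∞ := ENNReal.ofReal (r / 100) ^ p.toReal with hR100def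
    have hR100ne0 : R100 ≠ 0 := by
      simp only [hR100def, ne_eq, ENNReal.rpow_eq_zero_iff, not_or]
      constructor
      · rintro ⟨h1, -⟩
        rw [ENNReal.ofReal_eq_zero] at h1
        linarith
      · rintro ⟨h1, -⟩
        exact ENNReal.ofReal_ne_top h1
    have hR100fin : R100 ≠ ⊤ := by
      apply ENNReal.rpow_ne_top_of_nonneg hq0.le ENNReal.ofReal_ne_top
    have hc2q0 : c2 ^ p.toReal ≠ 0 := by
      simp only [ne_eq, ENNReal.rpow_eq_zero_iff, not_or]
      exact ⟨fun h => hc2ne0 h.1, fun h => hc2fin h.1⟩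
    have hc2qfin : c2 ^ p.toReal ≠ ⊤ := ENNReal.rpow_ne_top_of_nonneg hq0.le hc2fin
    have hε1pos : 0 < R100 / c2 ^ p.toReal :=
      ENNReal.div_pos hR100ne0 hc2qfin
    obtain ⟨s, hs⟩ := exists_tail (fun m => β m ^ p.toReal) hβsum hε1pos
    set e' : ℝ := (r / 100) / (s.card + 1) with he'def
    have he'pos : 0 < e' := by
      apply div_pos (by linarith) (by positivity)
    set βn : ℤ → ℝ≥0∞ := fun m =>
      if m ∈ s then (if β m = 0 then 0 else β m + ENNReal.ofReal e') else β m + c2 * β m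
      with hβndef
    have hβmono : ∀ m, β m ≤ βn m := by
      intro m
      simp only [hβndef]
      by_cases hm : m ∈ s
      · rw [if_pos hm]
        by_cases h0 : β m = 0
        · rw [if_pos h0, h0]
        · rw [if_neg h0]; exact le_self_add
      · rw [if_neg hm]; exact le_self_add
    have hβnfin : ∀ m, βn m ≠ ⊤ := by
      intro m
      simp only [hβndef]
      by_cases hm : m ∈ s
      · rw [if_pos hm]
        by_cases h0 : β m = 0
        · rw [if_pos h0]; exact ENNReal.zero_ne_top
        · rw [if_neg h0]
          exact ENNReal.add_ne_top.mpr ⟨hβfin m, ENNReal.ofReal_ne_top⟩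
      · rw [if_neg hm]
        exact ENNReal.add_ne_top.mpr ⟨hβfin m, ENNReal.mul_ne_top hc2fin (hβfin m)⟩
    -- gap bounds
    have hgap : ∀ m, βn m - β m ≤ (if m ∈ s then ENNReal.ofReal e' else c2 * β m) := by
      intro m
      simp only [hβndef]
      by_cases hm : m ∈ s
      · rw [if_pos hm, if_pos hm]
        by_cases h0 : β m = 0
        · rw [if_pos h0, h0]; simp
        · rw [if_neg h0, ENNReal.add_sub_cancel_left (hβfin m)]
      · rw [if_neg hm, if_neg hm, ENNReal.add_sub_cancel_left (hβfin m)]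
    -- head cost bound
    have hheadsum : ∑' _ : (↑s : Set ℤ), (ENNReal.ofReal e') ^ p.toReal ≤ R100 := by
      rw [Finset.tsum_subtype' s (fun _ => (ENNReal.ofReal e') ^ p.toReal), Finset.sum_const,
        nsmul_eq_mul]
      rw [ENNReal.ofReal_rpow_of_nonneg he'pos.le hq0.le, hR100def,
        ENNReal.ofReal_rpow_of_nonneg (by linarith) hq0.le]
      have hcast : (s.card : ℝ≥0∞) = ENNReal.ofReal (s.card : ℝ) := by
        rw [ENNReal.ofReal_natCast]
      rw [hcast, ← ENNReal.ofReal_mul (by positivity)]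
      apply ENNReal.ofReal_le_ofReal
      have hcard0 : (0:ℝ) ≤ (s.card : ℝ) := Nat.cast_nonneg _
      have hbase : (1:ℝ) ≤ (s.card : ℝ) + 1 := by linarith
      have h1 : ((s.card : ℝ)) ≤ ((s.card : ℝ) + 1) ^ p.toReal := by
        calc ((s.card : ℝ)) ≤ (s.card : ℝ) + 1 := by linarith
          _ = ((s.card : ℝ) + 1) ^ (1:ℝ) := (Real.rpow_one _).symm
          _ ≤ _ := Real.rpow_le_rpow_of_exponent_le hbase hq1
      have hd : (0:ℝ) < ((s.card : ℝ) + 1) ^ p.toReal := by positivity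
      have he'q : e' ^ p.toReal = (r/100) ^ p.toReal / ((s.card : ℝ) + 1) ^ p.toReal := by
        rw [he'def, Real.div_rpow (by linarith) (by positivity)]
      rw [he'q]
      calc (s.card : ℝ) * ((r/100) ^ p.toReal / ((s.card : ℝ) + 1) ^ p.toReal)
          = (r/100) ^ p.toReal * ((s.card : ℝ) / ((s.card : ℝ) + 1) ^ p.toReal) := by ring
        _ ≤ (r/100) ^ p.toReal * 1 :=
            mul_le_mul_of_nonneg_left ((div_le_one hd).mpr h1) (by positivity)
        _ = (r/100) ^ p.toReal := mul_one _
    -- tail cost bound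
    have hcompl_eq2 : ∀ f : ℤ → ℝ≥0∞, ∑' m : ((↑s : Set ℤ)ᶜ : Set ℤ), f m
        = ∑' m : {x : ℤ // x ∉ s}, f m.1 := by
      intro f
      exact ((Equiv.subtypeEquivRight (fun m => by
        simp only [Set.mem_compl_iff, Finset.mem_coe])).tsum_eq
        (fun m : {x : ℤ // x ∉ s} => f m.1)).symm
    have htailβ : ∑' m : ((↑s : Set ℤ)ᶜ : Set ℤ), β m ^ p.toReal < R100 / c2 ^ p.toReal := by
      rw [hcompl_eq2 (fun m => β m ^ p.toReal)]
      exact hs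
    have htailsum : ∑' m : ((↑s : Set ℤ)ᶜ : Set ℤ), (c2 * β m) ^ p.toReal ≤ R100 := by
      have h1 : ∀ m : ℤ, (c2 * β m) ^ p.toReal = c2 ^ p.toReal * β m ^ p.toReal :=
        fun m => ENNReal.mul_rpow_of_nonneg _ _ hq0.le
      calc ∑' m : ((↑s : Set ℤ)ᶜ : Set ℤ), (c2 * β m) ^ p.toReal
          = c2 ^ p.toReal * ∑' m : ((↑s : Set ℤ)ᶜ : Set ℤ), β m ^ p.toReal := by
            simp_rw [h1]; rw [ENNReal.tsum_mul_left]
        _ ≤ c2 ^ p.toReal * (R100 / c2 ^ p.toReal) := mul_le_mul_right htailβ.le _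
        _ = R100 := ENNReal.mul_div_cancel hc2q0 hc2qfin
    -- total growth cost
    have hgapsum : ∑' m : ℤ, (βn m - β m) ^ p.toReal ≤ R100 + R100 := by
      rw [← Summable.tsum_add_tsum_compl (s := (↑s : Set ℤ)) ENNReal.summable ENNReal.summable]
      apply add_le_add
      · refine le_trans (ENNReal.tsum_le_tsum (fun m => ?_)) hheadsum
        have := hgap m.1
        rw [if_pos (Finset.mem_coe.mp m.2)] at this
        exact ENNReal.rpow_le_rpow this hq0.le
      · refine le_trans (ENNReal.tsum_le_tsum (fun m => ?_)) htailsum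
        have hm : (m : ℤ) ∉ s := fun hms => m.2 (Finset.mem_coe.mpr hms)
        have := hgap m.1
        rw [if_neg hm] at this
        exact ENNReal.rpow_le_rpow this hq0.le
    have hRRfin : R100 + R100 ≠ ⊤ := ENNReal.add_ne_top.mpr ⟨hR100fin, hR100fin⟩
    -- the new β is admissible
    have hβnsum : ∑' m, βn m ^ p.toReal ≠ ⊤ := by
      rw [← Summable.tsum_add_tsum_compl (s := (↑s : Set ℤ)) ENNReal.summable ENNReal.summable]
      refine ENNReal.add_ne_top.mpr ⟨?_, ?_⟩
      · rw [Finset.tsum_subtype' s (fun m => βn m ^ p.toReal)]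
        exact (ENNReal.sum_lt_top.mpr (fun m _ =>
          lt_top_iff_ne_top.mpr (ENNReal.rpow_ne_top_of_nonneg hq0.le (hβnfin m)))).ne
      · have h1 : ∀ m : ((↑s : Set ℤ)ᶜ : Set ℤ), βn m.1 ^ p.toReal
            = (1 + c2) ^ p.toReal * β m.1 ^ p.toReal := by
          intro m
          have hm : (m : ℤ) ∉ s := fun hms => m.2 (Finset.mem_coe.mpr hms)
          have h2 : βn m.1 = (1 + c2) * β m.1 := by
            simp only [hβndef]
            rw [if_neg hm, add_mul, one_mul]
          rw [h2, ENNReal.mul_rpow_of_nonneg _ _ hq0.le]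
        rw [tsum_congr h1, ENNReal.tsum_mul_left]
        refine ENNReal.mul_ne_top ?_ ?_
        · exact ENNReal.rpow_ne_top_of_nonneg hq0.le
            (ENNReal.add_ne_top.mpr ⟨ENNReal.one_ne_top, hc2fin⟩)
        · exact fun h => hβsum (eq_top_iff.mpr (h ▸ tsum_set_le _ _))
    -- bump the center into the deep set
    set T0 : Set ℤ := {m | Nc p m ⇑v < βn m} with hT0def
    have hcost0 : ∑' m : T0, (βn m - Nc p m ⇑v) ^ p.toReal ≤ R100 + R100 := by
      calc ∑' m : T0, (βn m - Nc p m ⇑v) ^ p.toReal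
          ≤ ∑' m : T0, (βn m.1 - β m.1) ^ p.toReal :=
            ENNReal.tsum_le_tsum (fun m =>
              ENNReal.rpow_le_rpow (tsub_le_tsub_left (hvTh m.1) _) hq0.le)
        _ ≤ ∑' m : ℤ, (βn m - β m) ^ p.toReal := tsum_set_le _ _
        _ ≤ R100 + R100 := hgapsum
    obtain ⟨v', hv'T, hv'N, hv'cost⟩ := exists_adjust hpt v T0 βn
      (fun m hm => (le_of_lt hm)) (fun m _ => hβnfin m)
      ((lt_of_le_of_lt hcost0 (lt_top_iff_ne_top.mpr hRRfin)).ne)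
    have hv'Th : v' ∈ Th p βn := by
      intro m
      by_cases hm : m ∈ T0
      · rw [hv'T m hm]
      · rw [hv'N m hm]
        exact le_of_not_gt hm
    have hv'edist : edist v' v ≤ ENNReal.ofReal (r / 25) := by
      rw [← ENNReal.rpow_le_rpow_iff hq0]
      refine le_trans hv'cost (le_trans hcost0 ?_)
      have h4 : ENNReal.ofReal (r/25) = 4 * ENNReal.ofReal (r/100) := by
        rw [show (r/25 : ℝ) = 4 * (r/100) by ring, ENNReal.ofReal_mul (by norm_num)]
        norm_num
      rw [h4, ENNReal.mul_rpow_of_nonneg _ _ hq0.le]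
      have h5 : (2:ℝ≥0∞) ≤ (4:ℝ≥0∞) ^ p.toReal := by
        calc (2:ℝ≥0∞) ≤ 4 := by norm_num
          _ = (4:ℝ≥0∞) ^ (1:ℝ) := (ENNReal.rpow_one _).symm
          _ ≤ _ := ENNReal.rpow_le_rpow_of_exponent_le (by norm_num) hq1
      calc R100 + R100 = 2 * R100 := (two_mul _).symm
        _ ≤ (4:ℝ≥0∞) ^ p.toReal * R100 := mul_le_mul_left h5 R100
    have hv'dist : dist v' v ≤ r / 25 := dist_le_of_edist_le (by linarith) hv'edist
    refine ⟨βn, v', r / 4, ⟨hβnsum, hv'Th, by linarith⟩, hβmono, ?_, by linarith, by linarith, ?_⟩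
    · intro z hz
      simp only [mem_closedBall] at hz ⊢
      calc dist z v ≤ dist z v' + dist v' v := dist_triangle _ _ _
        _ ≤ r/4 + r/25 := by linarith
        _ ≤ r := by linarith
    -- the trap: the new window avoids S
    rw [Set.eq_empty_iff_forall_notMem]
    rintro z ⟨⟨hzTh, hzball⟩, hzS⟩
    set δ : ℝ := min e' (r / 8) / 2 with hδdef
    have hδ0 : 0 < δ := by
      have h1 : 0 < min e' (r/8) := lt_min he'pos (by linarith)
      rw [hδdef]
      linarith
    obtain ⟨y, hyb, hyne, hhole⟩ := hS z hzS δ hδ0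
    have hd0 : 0 < dist z y := dist_pos.mpr (fun h => hyne h.symm)
    have hdlt : dist z y < δ := by rw [dist_comm]; exact mem_ball.mp hyb
    have hde' : dist z y < e' := by
      have := min_le_left e' (r/8)
      rw [hδdef] at hdlt
      linarith
    have hdr16 : dist z y < r/16 := by
      have := min_le_right e' (r/8)
      rw [hδdef] at hdlt
      linarith
    set T1 : Set ℤ := {m | Nc p m ⇑y < β m} with hT1def
    have hkey : ∀ m ∈ T1, β m - Nc p m ⇑y ≤ ENNReal.ofReal (lam / 2) * Nc p m (⇑z - ⇑y) := by
      intro m hm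
      have hmlt : Nc p m ⇑y < β m := hm
      have htri : Nc p m ⇑z ≤ Nc p m ⇑y + Nc p m (⇑z - ⇑y) := NcL_le_add_sub hp1 m z y
      have hlow : βn m ≤ Nc p m ⇑z := hzTh m
      have hnots : m ∉ s := by
        intro hms
        have hβ0 : β m ≠ 0 := by
          intro h0
          rw [h0] at hmlt
          simp at hmlt
        have hβn2 : βn m = β m + ENNReal.ofReal e' := by
          simp only [hβndef]
          rw [if_pos hms, if_neg hβ0]
        have hcoord : Nc p m (⇑z - ⇑y) ≤ edist z y := by
          calc Nc p m (⇑z - ⇑y) ≤ eLpNorm (⇑z - ⇑y) p volume := Nc_le_eLpNorm _ _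
            _ = edist z y := (Lp.edist_def _ _).symm
        have hlt : edist z y < ENNReal.ofReal e' := by
          rw [edist_dist]
          exact (ENNReal.ofReal_lt_ofReal_iff he'pos).mpr hde'
        have hge : β m + ENNReal.ofReal e' ≤ Nc p m ⇑y + Nc p m (⇑z - ⇑y) := by
          rw [← hβn2]
          exact le_trans hlow htri
        have hcontra : Nc p m ⇑y + Nc p m (⇑z - ⇑y) < β m + ENNReal.ofReal e' :=
          ENNReal.add_lt_add hmlt (lt_of_le_of_lt hcoord hlt)
        exact absurd (lt_of_le_of_lt hge hcontra) (lt_irrefl _)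
      have hβn2 : βn m = β m + c2 * β m := by
        simp only [hβndef]
        rw [if_neg hnots]
      have h1 : β m + c2 * β m ≤ β m + Nc p m (⇑z - ⇑y) := by
        calc β m + c2 * β m = βn m := hβn2.symm
          _ ≤ Nc p m ⇑z := hlow
          _ ≤ Nc p m ⇑y + Nc p m (⇑z - ⇑y) := htri
          _ ≤ β m + Nc p m (⇑z - ⇑y) := add_le_add_left hmlt.le _
      have h2 : c2 * β m ≤ Nc p m (⇑z - ⇑y) := (ENNReal.add_le_add_iff_left (hβfin m)).mp h1
      have h3 : β m ≤ ENNReal.ofReal (lam/2) * Nc p m (⇑z - ⇑y) := by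
        have heq : β m = c2⁻¹ * (c2 * β m) := by
          rw [← mul_assoc, ENNReal.inv_mul_cancel hc2ne0 hc2fin, one_mul]
        have hinv : c2⁻¹ = ENNReal.ofReal (lam/2) := by
          rw [hc2def, ← ENNReal.ofReal_inv_of_pos (by positivity)]
          rw [inv_div]
        rw [heq, hinv]
        exact mul_le_mul_right h2 _
      exact le_trans tsub_le_self h3
    have hcost1 : ∑' m : T1, (β m - Nc p m ⇑y) ^ p.toReal
        ≤ (ENNReal.ofReal (lam/2) * edist z y) ^ p.toReal := by
      calc ∑' m : T1, (β m - Nc p m ⇑y) ^ p.toReal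
          ≤ ∑' m : T1, (ENNReal.ofReal (lam/2) * Nc p m (⇑z - ⇑y)) ^ p.toReal :=
            ENNReal.tsum_le_tsum (fun m => ENNReal.rpow_le_rpow (hkey m.1 m.2) hq0.le)
        _ = ENNReal.ofReal (lam/2) ^ p.toReal * ∑' m : T1, Nc p m.1 (⇑z - ⇑y) ^ p.toReal := by
            simp_rw [ENNReal.mul_rpow_of_nonneg _ _ hq0.le]
            rw [ENNReal.tsum_mul_left]
        _ ≤ ENNReal.ofReal (lam/2) ^ p.toReal * eLpNorm (⇑z - ⇑y) p volume ^ p.toReal :=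
            mul_le_mul_right (tsum_Nc_pow_le hp1 hpt T1 _) _
        _ = _ := by rw [← ENNReal.mul_rpow_of_nonneg _ _ hq0.le, Lp.edist_def]
    have hcost1fin : (ENNReal.ofReal (lam/2) * edist z y) ^ p.toReal ≠ ⊤ :=
      ENNReal.rpow_ne_top_of_nonneg hq0.le
        (ENNReal.mul_ne_top ENNReal.ofReal_ne_top (edist_ne_top z y))
    obtain ⟨zz, hzzT, hzzN, hzzcost⟩ := exists_adjust hpt y T1 β
      (fun m hm => le_of_lt hm) (fun m _ => hβfin m)
      ((lt_of_le_of_lt hcost1 (lt_top_iff_ne_top.mpr hcost1fin)).ne)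
    have hzzTh : zz ∈ Th p β := by
      intro m
      by_cases hm : m ∈ T1
      · rw [hzzT m hm]
      · rw [hzzN m hm]
        exact le_of_not_gt hm
    have hzzedist : edist zz y ≤ ENNReal.ofReal (lam/2 * dist z y) := by
      rw [← ENNReal.rpow_le_rpow_iff hq0]
      refine le_trans hzzcost (le_trans hcost1 ?_)
      apply ENNReal.rpow_le_rpow _ hq0.le
      rw [edist_dist, ← ENNReal.ofReal_mul (by positivity)]
    have hzzdist : dist zz y ≤ lam/2 * dist z y :=
      dist_le_of_edist_le (by positivity) hzzedist
    have hzzhole : zz ∈ ball y (lam * dist z y) := by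
      rw [mem_ball]
      have hh : lam/2 * dist z y < lam * dist z y :=
        mul_lt_mul_of_pos_right (by linarith only [hl0]) hd0
      linarith only [hzzdist, hh]
    have hzznear : dist zz v < r := by
      have h1 : dist zz y ≤ dist z y :=
        le_trans hzzdist (mul_le_of_le_one_left hd0.le (by linarith only [hl0, hl1]))
      have h2 : dist z v' ≤ r/4 := mem_closedBall.mp hzball
      calc dist zz v ≤ dist zz y + dist y v := dist_triangle _ _ _
        _ ≤ dist zz y + (dist y z + dist z v) :=
            add_le_add_right (dist_triangle y z v) _
        _ ≤ dist zz y + (dist y z + (dist z v' + dist v' v)) :=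
            add_le_add_right (add_le_add_right (dist_triangle z v' v) _) _
        _ < r := by
            rw [dist_comm y z]
            linarith only [h1, h2, hdr16, hv'dist, hr]
    have hzzclos : zz ∈ closure S := hcase zz hzzTh hzznear
    obtain ⟨u, hu⟩ := (_root_.mem_closure_iff.mp hzzclos)
      (ball y (lam * dist z y)) isOpen_ball hzzhole
    rw [hhole] at hu
    exact hu

end Stmt5Aux

/-- For each `g ∈ L^p(ℝ)`, the set
`Θ_g = {f : ‖f χ_{[m,m+1]}‖_p ≥ ‖g χ_{[m,m+1]}‖_p for all m ∈ ℤ}` is not `σ`-porous. -/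
theorem stmt_5 (p : ℝ≥0∞) [Fact (1 ≤ p)] (hp : p ≠ ⊤)
    (g : Lp ℂ p (volume : Measure ℝ)) :
    ¬ SigmaPorous {f : Lp ℂ p (volume : Measure ℝ) | ∀ m : ℤ,
      eLpNorm ((Set.Icc (m : ℝ) (m + 1)).indicator ⇑g) p volume ≤
        eLpNorm ((Set.Icc (m : ℝ) (m + 1)).indicator ⇑f) p volume} := by
  rintro ⟨S, hS, hcov⟩
  classical
  have hp1 : 1 ≤ p := Fact.out
  have hq0 : 0 < p.toReal := Stmt5Aux.hq_pos hp1 hp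
  set a : ℤ → ℝ≥0∞ := fun m => Stmt5Aux.Nc p m ⇑g with hadef
  have hinit : Stmt5Aux.GoodSt p a g 1 := by
    refine ⟨?_, fun m => le_rfl, one_pos⟩
    rw [← Stmt5Aux.decomp hp1 hp]
    exact ENNReal.rpow_ne_top_of_nonneg hq0.le (Lp.eLpNorm_ne_top g)
  let St := {t : (ℤ → ℝ≥0∞) × (Lp ℂ p (volume : Measure ℝ)) × ℝ //
    Stmt5Aux.GoodSt p t.1 t.2.1 t.2.2}
  let Rel : St → St → ℕ → Prop := fun t t' n =>
    (∀ m, t.1.1 m ≤ t'.1.1 m) ∧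
    closedBall t'.1.2.1 t'.1.2.2 ⊆ closedBall t.1.2.1 t.1.2.2 ∧
    t'.1.2.2 ≤ t.1.2.2 / 2 ∧ dist t'.1.2.1 t.1.2.1 ≤ t.1.2.2 ∧
    (Stmt5Aux.Th p t'.1.1 ∩ closedBall t'.1.2.1 t'.1.2.2) ∩ S n = ∅
  have hstep : ∀ (t : St) (n : ℕ), ∃ t' : St, Rel t t' n := by
    intro t n
    obtain ⟨lam, hl0, hl1, hpor⟩ := hS n
    obtain ⟨β', v', r', hgood, h1, h2, h3, h4, h5⟩ := Stmt5Aux.step hp t.2 hl0 hl1 hpor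
    exact ⟨⟨(β', v', r'), hgood⟩, h1, h2, h3, h4, h5⟩
  choose next hnext using hstep
  let F : ℕ → St := fun n => Nat.rec ⟨(a, g, 1), hinit⟩ (fun n prev => next prev n) n
  have hFrel : ∀ n, Rel (F n) (F (n + 1)) n := fun n => hnext (F n) n
  let βs : ℕ → ℤ → ℝ≥0∞ := fun n => (F n).1.1
  let vs : ℕ → Lp ℂ p (volume : Measure ℝ) := fun n => (F n).1.2.1
  let rs : ℕ → ℝ := fun n => (F n).1.2.2
  have hr0 : ∀ n, 0 < rs n := fun n => (F n).2.2.2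
  have hrs0 : rs 0 = 1 := rfl
  have hrgeo : ∀ n, rs n ≤ (1/2 : ℝ)^n := by
    intro n
    induction n with
    | zero => rw [hrs0]; norm_num
    | succ n ih =>
        have h1 : rs (n+1) ≤ rs n / 2 := (hFrel n).2.2.1
        have h2 : ((1:ℝ)/2)^(n+1) = (1/2)^n / 2 := by rw [pow_succ]; ring
        rw [h2]
        linarith only [h1, ih]
  have hcauchy : CauchySeq vs := by
    apply cauchySeq_of_le_geometric (1/2 : ℝ) 1 (by norm_num)
    intro n
    rw [one_mul, dist_comm]
    exact le_trans (hFrel n).2.2.2.1 (hrgeo n)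
  obtain ⟨xb, hxb⟩ := cauchySeq_tendsto_of_complete hcauchy
  let K : ℕ → Set (Lp ℂ p (volume : Measure ℝ)) :=
    fun n => Stmt5Aux.Th p (βs n) ∩ closedBall (vs n) (rs n)
  have hKclosed : ∀ n, IsClosed (K n) :=
    fun n => (Stmt5Aux.isClosed_Th hp1 (βs n)).inter Metric.isClosed_closedBall
  have hKsub : ∀ n, K (n + 1) ⊆ K n := fun n =>
    Set.inter_subset_inter (Stmt5Aux.Th_mono (hFrel n).1) (hFrel n).2.1
  have hvK : ∀ k, vs k ∈ K k := fun k => ⟨(F k).2.2.1, mem_closedBall_self (hr0 k).le⟩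
  have hchain : ∀ n k, n ≤ k → K k ⊆ K n := by
    intro n k hnk
    induction hnk with
    | refl => exact subset_rfl
    | step h ih => exact Set.Subset.trans (hKsub _) ih
  have hxbK : ∀ n, xb ∈ K n := by
    intro n
    apply (hKclosed n).mem_of_tendsto hxb
    filter_upwards [Filter.eventually_ge_atTop n] with k hk
    exact hchain n k hk (hvK k)
  have hxbTh : xb ∈ Stmt5Aux.Th p a := (hxbK 0).1
  have hxbU : xb ∈ ⋃ n, S n := by
    rw [← hcov]
    exact hxbTh
  obtain ⟨n, hn⟩ := Set.mem_iUnion.mp hxbU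
  have hdisj := (hFrel n).2.2.2.2
  rw [Set.eq_empty_iff_forall_notMem] at hdisj
  exact hdisj xb ⟨hxbK (n+1), hn⟩
end
end

section
/- Let $p\geq 1$, $G$ a discrete group, $a\in G$, and $\mu$ a left Haar measure on $G$ with $\mu(\{e\})\geq 1$. Let $(\gamma_n)_n$ be an unbounded sequence of non-negative integers and $w:G\to(0,\infty)$ a bounded function such that for some finite nonempty $F\subseteq G$ and some $N>0$: $a^{\gamma_n}F\cap F=\varnothing$ for all $n\geq N$, and $\beta:=\inf\{\prod_{k=1}^{\gamma_n}w(a^k t): n\geq N, t\in F\}>0$. Then the set $\{f\in L^p(G,\mu): \|T_{a,w,p}^{\gamma_n}f-\chi_F\|_p\geq\mu(F)^{1/p} \text{ for all } n\geq N\}$ is not $\sigma$-porous in $L^p(G,\mu)$. -/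
open MeasureTheory Metric Set ENNReal

/-- The `n`-th power of the weighted translation operator `T_{a,w} f = w · (f ∘ (a⁻¹ · ·))`,
computed pointwise: `(T^n f)(x) = (∏_{k=0}^{n-1} w(a^{-k} x)) f(a^{-n} x)`. -/
noncomputable def Tpow {G : Type*} [Group G] (a : G) (w : G → ℝ) (n : ℕ) (f : G → ℂ) :
    G → ℂ :=
  fun x => (∏ k ∈ Finset.range n, (w ((a ^ k)⁻¹ * x) : ℂ)) * f ((a ^ n)⁻¹ * x)

lemma ae_eq_at_atom {α : Type*} [MeasurableSpace α] {μ : Measure α} {β : Type*}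
    {u v : α → β} (h : u =ᵐ[μ] v) {t : α} (ht : μ {t} ≠ 0) : u t = v t := by
  by_contra hne
  have hsub : ({t} : Set α) ⊆ {x | ¬ u x = v x} := by
    intro x hx; simp only [Set.mem_singleton_iff] at hx; subst hx; exact hne
  exact ht (measure_mono_null hsub (ae_iff.mp h))

lemma porous_isNowhereDense {X : Type*} [MetricSpace X] {lam : ℝ} (hl : 0 < lam)
    {E : Set X} (hE : Porous lam E) : IsNowhereDense E := by
  rw [IsNowhereDense, eq_empty_iff_forall_notMem]
  intro x hx
  rcases Metric.isOpen_iff.mp isOpen_interior x hx with ⟨ε, hε, hball⟩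
  have hballcl : Metric.ball x ε ⊆ closure E := hball.trans interior_subset
  have hxcl : x ∈ closure E := interior_subset hx
  rcases Metric.mem_closure_iff.mp hxcl (ε/4) (by linarith) with ⟨x', hx'E, hdx⟩
  rcases hE x' hx'E (ε/4) (by linarith) with ⟨y, hyb, hyne, hhole⟩
  have hdy : dist y x' < ε/4 := Metric.mem_ball.mp hyb
  have hdpos : 0 < dist x' y := dist_pos.mpr (fun h => hyne h.symm)
  have hy_hole : y ∈ Metric.ball y (lam * dist x' y) :=
    Metric.mem_ball_self (by positivity)
  have hy_cl : y ∈ closure E := by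
    apply hballcl
    rw [Metric.mem_ball]
    calc dist y x ≤ dist y x' + dist x' x := dist_triangle _ _ _
      _ < ε/4 + ε/4 := by rw [dist_comm x' x]; exact add_lt_add hdy hdx
      _ < ε := by linarith
  rcases mem_closure_iff.mp hy_cl _ Metric.isOpen_ball hy_hole with ⟨z, hz1, hz2⟩
  have : z ∈ Metric.ball y (lam * dist x' y) ∩ E := ⟨hz1, hz2⟩
  rw [hhole] at this
  exact this

lemma sigmaPorous_isMeagre {X : Type*} [MetricSpace X] {E : Set X} (h : SigmaPorous E) :
    IsMeagre E := by
  rcases h with ⟨S, hS, rfl⟩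
  apply isMeagre_iUnion
  intro n
  rcases hS n with ⟨lam, hl0, _, hP⟩
  have hnd : IsNowhereDense (S n) := porous_isNowhereDense hl0 hP
  rw [isMeagre_iff_countable_union_isNowhereDense]
  exact ⟨{S n}, by simpa using hnd, countable_singleton _, by simp⟩

lemma not_sigmaPorous_of_ball_subset {X : Type*} [MetricSpace X] [BaireSpace X]
    {E : Set X} {x : X} {r : ℝ} (hr : 0 < r) (h : Metric.ball x r ⊆ E) :
    ¬ SigmaPorous E := by
  intro hσ
  have hm : IsMeagre (Metric.ball x r) := (sigmaPorous_isMeagre hσ).mono h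
  have hd : Dense (Metric.ball x r)ᶜ := dense_of_mem_residual hm
  rcases hd.inter_open_nonempty _ Metric.isOpen_ball ⟨x, Metric.mem_ball_self hr⟩ with
    ⟨z, hz1, hz2⟩
  exact hz2 hz1

lemma key_lower {G : Type*} [MeasurableSpace G] [MeasurableSingletonClass G]
    (μ : Measure G) {p : ℝ≥0∞} (hp0 : p ≠ 0) (hp : p ≠ ⊤)
    (A : Finset G) {h : G → ℂ} (hb : ∀ x ∈ A, 1 ≤ ‖h x‖) :
    (μ (A : Set G)) ^ (1 / p.toReal) ≤ eLpNorm h p μ := by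
  have hpt : 0 < p.toReal := ENNReal.toReal_pos hp0 hp
  rw [eLpNorm_eq_lintegral_rpow_enorm_toReal hp0 hp]
  apply ENNReal.rpow_le_rpow _ (by positivity)
  have hA : (A : Set G) = ⋃ x ∈ A, {x} := by ext y; simp
  calc μ (A : Set G) = ∑ x ∈ A, μ {x} := by
        rw [hA, measure_biUnion_finset ?_ (fun _ _ => measurableSet_singleton _)]
        intro x _ y _ hxy
        exact Set.disjoint_singleton.mpr hxy
    _ ≤ ∑ x ∈ A, (‖h x‖₊ : ℝ≥0∞) ^ p.toReal * μ {x} := by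
        apply Finset.sum_le_sum
        intro x hx
        apply le_mul_of_one_le_left zero_le
        calc (1 : ℝ≥0∞) = 1 ^ p.toReal := (ENNReal.one_rpow _).symm
          _ ≤ (‖h x‖₊ : ℝ≥0∞) ^ p.toReal := by
              apply ENNReal.rpow_le_rpow _ hpt.le
              exact_mod_cast (by exact_mod_cast hb x hx : (1:NNReal) ≤ ‖h x‖₊)
    _ = ∫⁻ x in (A : Set G), (‖h x‖₊ : ℝ≥0∞) ^ p.toReal ∂μ := (lintegral_finset A _).symm
    _ ≤ ∫⁻ x, (‖h x‖₊ : ℝ≥0∞) ^ p.toReal ∂μ := lintegral_mono' Measure.restrict_le_self le_rfl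

lemma norm_lt_of_eLpNorm_lt {G : Type*} [MeasurableSpace G] {μ : Measure G}
    [MeasurableSingletonClass G]
    {p : ℝ≥0∞} (hp0 : p ≠ 0) (hp : p ≠ ⊤) {u : G → ℂ} {r : ℝ} (hr : 0 < r)
    (h : eLpNorm u p μ < ENNReal.ofReal r) {t : G} (ht : 1 ≤ μ {t}) : ‖u t‖ < r := by
  have hpt : 0 < p.toReal := ENNReal.toReal_pos hp0 hp
  rw [eLpNorm_eq_lintegral_rpow_enorm_toReal hp0 hp] at h
  have h2 : ∫⁻ x, (‖u x‖₊ : ℝ≥0∞) ^ p.toReal ∂μ < (ENNReal.ofReal r) ^ p.toReal := by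
    have := ENNReal.rpow_lt_rpow h hpt
    rwa [← ENNReal.rpow_mul, one_div, inv_mul_cancel₀ hpt.ne', ENNReal.rpow_one] at this
  have h3 : (‖u t‖₊ : ℝ≥0∞) ^ p.toReal ≤ ∫⁻ x, (‖u x‖₊ : ℝ≥0∞) ^ p.toReal ∂μ := by
    calc (‖u t‖₊ : ℝ≥0∞) ^ p.toReal ≤ (‖u t‖₊ : ℝ≥0∞) ^ p.toReal * μ {t} :=
          le_mul_of_one_le_right zero_le ht
      _ = ∫⁻ x in ({t} : Set G), (‖u x‖₊ : ℝ≥0∞) ^ p.toReal ∂μ :=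
          (lintegral_singleton (fun x => ((‖u x‖₊ : ℝ≥0∞) ^ p.toReal)) t).symm
      _ ≤ _ := lintegral_mono' Measure.restrict_le_self le_rfl
  have h5 : (‖u t‖₊ : ℝ≥0∞) < ENNReal.ofReal r :=
    (ENNReal.rpow_lt_rpow_iff hpt).mp (lt_of_le_of_lt h3 h2)
  rw [ENNReal.ofReal, ENNReal.coe_lt_coe] at h5
  calc ‖u t‖ = ((‖u t‖₊ : NNReal) : ℝ) := rfl
    _ < (r.toNNReal : ℝ) := by exact_mod_cast h5
    _ = r := Real.coe_toNNReal r hr.le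

/-- For a discrete group with left Haar measure `μ` with `μ{e} ≥ 1`, an unbounded sequence
`(γ_n)`, and a bounded weight `w` satisfying the separation and infimum conditions relative to
a finite nonempty `F`, the set `{f : ‖T^{γ_n} f - χ_F‖_p ≥ μ(F)^{1/p} for all n ≥ N}`
is not `σ`-porous. -/
theorem stmt_7 {G : Type*} [Group G] [MeasurableSpace G] [MeasurableSingletonClass G]
    (μ : Measure G) [μ.IsMulLeftInvariant] (hμe : 1 ≤ μ {(1 : G)})
    (p : ℝ≥0∞) [Fact (1 ≤ p)] (hp : p ≠ ⊤) (a : G)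
    (γ : ℕ → ℕ) (hγ : ∀ M : ℕ, ∃ n, M ≤ γ n)
    (w : G → ℝ) (hw0 : ∀ x, 0 < w x) (hwb : ∃ C, ∀ x, w x ≤ C)
    (F : Finset G) (hF : F.Nonempty) (N : ℕ) (hN : 0 < N)
    (hdisj : ∀ n ≥ N, ∀ t ∈ F, a ^ (γ n) * t ∉ F)
    (hβ : ∃ β > (0 : ℝ), ∀ n ≥ N, ∀ t ∈ F, β ≤ ∏ k ∈ Finset.Icc 1 (γ n), w (a ^ k * t)) :
    ¬ SigmaPorous {f : Lp ℂ p μ | ∀ n ≥ N,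
      (μ (F : Set G)) ^ (1 / p.toReal) ≤
        eLpNorm (fun x => Tpow a w (γ n) (⇑f) x -
          (F : Set G).indicator (fun _ => (1 : ℂ)) x) p μ} := by
  classical
  obtain ⟨β, hβ0, hβle⟩ := hβ
  have hp1 : (1 : ℝ≥0∞) ≤ p := Fact.out
  have hp0 : p ≠ 0 := by intro h; rw [h] at hp1; simp at hp1
  have hpt : 0 < p.toReal := ENNReal.toReal_pos hp0 hp
  have hsing : ∀ x : G, μ {x} = μ {(1 : G)} := by
    intro x
    have hmap := MeasureTheory.map_mul_left_eq_self μ x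
    have haem : AEMeasurable (fun y => x * y) μ := by
      by_contra hnm
      rw [Measure.map_of_not_aemeasurable hnm] at hmap
      have h0 := hμe
      rw [← hmap] at h0
      simp at h0
    have h2 : ((fun y => x * y) ⁻¹' {x} : Set G) = {1} := by
      ext y; simp [mul_eq_left]
    calc μ {x} = (μ.map (fun y => x * y)) {x} := by rw [hmap]
      _ = μ ((fun y => x * y) ⁻¹' {x}) :=
          Measure.map_apply_of_aemeasurable haem (measurableSet_singleton x)
      _ = μ {(1 : G)} := by rw [h2]
  have hsing1 : ∀ x : G, 1 ≤ μ {x} := fun x => by rw [hsing x]; exact hμe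
  have hne0 : ∀ x : G, μ {x} ≠ 0 := by
    intro x h0
    have := hsing1 x
    rw [h0] at this
    simp at this
  have hμfin : ∀ s : Finset G, μ (s : Set G) = s.card * μ {(1 : G)} := by
    intro s
    have h1 : (s : Set G) = ⋃ x ∈ s, {x} := by ext y; simp
    rw [h1, measure_biUnion_finset ?_ (fun _ _ => measurableSet_singleton _)]
    · rw [Finset.sum_congr rfl (fun x _ => hsing x), Finset.sum_const, nsmul_eq_mul]
    · intro x _ y _ hxy
      exact Set.disjoint_singleton.mpr hxy
  have hprod : ∀ (m : ℕ) (t : G),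
      (∏ k ∈ Finset.range m, w ((a ^ k)⁻¹ * (a ^ m * t))) =
        ∏ k ∈ Finset.Icc 1 m, w (a ^ k * t) := by
    intro m t
    have h1 : ∀ k ∈ Finset.range m, w ((a ^ k)⁻¹ * (a ^ m * t)) =
        (fun j => w (a ^ (1 + j) * t)) (m - 1 - k) := by
      intro k hk
      rw [Finset.mem_range] at hk
      have hm' : a ^ m = a ^ k * a ^ (m - k) := by rw [← pow_add]; congr 1; omega
      show _ = w (a ^ (1 + (m - 1 - k)) * t)
      rw [hm', mul_assoc, inv_mul_cancel_left]
      congr 3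
      omega
    calc ∏ k ∈ Finset.range m, w ((a ^ k)⁻¹ * (a ^ m * t))
        = ∏ k ∈ Finset.range m, (fun j => w (a ^ (1 + j) * t)) (m - 1 - k) :=
          Finset.prod_congr rfl h1
      _ = ∏ j ∈ Finset.range m, (fun j => w (a ^ (1 + j) * t)) j :=
          Finset.prod_range_reflect (fun j => w (a ^ (1 + j) * t)) m
      _ = ∏ k ∈ Finset.Icc 1 m, w (a ^ k * t) := by
          rw [← Finset.Ico_add_one_right_eq_Icc, Finset.prod_Ico_eq_prod_range]
          simp
  have hTnorm : ∀ (g : G → ℂ) (m : ℕ) (t : G),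
      ‖Tpow a w m g (a ^ m * t)‖ = (∏ k ∈ Finset.Icc 1 m, w (a ^ k * t)) * ‖g t‖ := by
    intro g m t
    unfold Tpow
    rw [inv_mul_cancel_left, norm_mul]
    congr 1
    rw [← Complex.ofReal_prod, Complex.norm_real, Real.norm_eq_abs, abs_of_pos, hprod]
    exact Finset.prod_pos (fun k _ => hw0 _)
  by_cases hfin : μ {(1 : G)} = ⊤
  · -- infinite atom case: the set is everything; take the unit ball around 0
    apply not_sigmaPorous_of_ball_subset (x := (0 : Lp ℂ p μ)) (r := 1) one_pos
    intro g _
    intro n hn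
    have hz : ∀ s : G, (g : G → ℂ) s = 0 := by
      intro s
      by_contra hgs
      have hlt : ∫⁻ x, (‖(g : G → ℂ) x‖₊ : ℝ≥0∞) ^ p.toReal ∂μ < ⊤ := by
        have h1 := Lp.eLpNorm_lt_top g
        rw [eLpNorm_eq_lintegral_rpow_enorm_toReal hp0 hp] at h1
        have h2 := ENNReal.rpow_lt_rpow h1 hpt
        rwa [← ENNReal.rpow_mul, one_div, inv_mul_cancel₀ hpt.ne', ENNReal.rpow_one,
          ENNReal.top_rpow_of_pos hpt] at h2
      have hle : (‖(g : G → ℂ) s‖₊ : ℝ≥0∞) ^ p.toReal * μ {s} ≤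
          ∫⁻ x, (‖(g : G → ℂ) x‖₊ : ℝ≥0∞) ^ p.toReal ∂μ := by
        calc (‖(g : G → ℂ) s‖₊ : ℝ≥0∞) ^ p.toReal * μ {s}
            = ∫⁻ x in ({s} : Set G), (‖(g : G → ℂ) x‖₊ : ℝ≥0∞) ^ p.toReal ∂μ :=
              (lintegral_singleton (fun x => ((‖(g : G → ℂ) x‖₊ : ℝ≥0∞) ^ p.toReal)) s).symm
          _ ≤ _ := lintegral_mono' Measure.restrict_le_self le_rfl
      rw [hsing s, hfin] at hle
      have hX : (‖(g : G → ℂ) s‖₊ : ℝ≥0∞) ^ p.toReal = 0 := by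
        by_contra hX0
        rw [ENNReal.mul_top hX0] at hle
        exact absurd (lt_of_le_of_lt hle hlt) (lt_irrefl _)
      have hX2 : (‖(g : G → ℂ) s‖₊ : ℝ≥0∞) = 0 := by
        rcases ENNReal.rpow_eq_zero_iff.mp hX with ⟨h, _⟩ | ⟨h, _⟩
        · exact h
        · exact absurd h (by simp)
      exact hgs (by simpa using hX2)
    have hb : ∀ t ∈ F, 1 ≤ ‖Tpow a w (γ n) (⇑g) t -
        (F : Set G).indicator (fun _ => (1 : ℂ)) t‖ := by
      intro t ht
      have h1 : (F : Set G).indicator (fun _ => (1 : ℂ)) t = 1 :=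
        Set.indicator_of_mem (by exact_mod_cast ht) _
      have h2 : Tpow a w (γ n) (⇑g) t = 0 := by
        unfold Tpow
        rw [hz ((a ^ γ n)⁻¹ * t), mul_zero]
      rw [h1, h2, zero_sub, norm_neg, norm_one]
    exact key_lower μ hp0 hp F hb
  · -- finite atom case
    have hμF : μ (F : Set G) ≠ ⊤ := by
      rw [hμfin F]
      exact ENNReal.mul_ne_top (ENNReal.natCast_ne_top _) hfin
    set c : ℂ := ((2 / β : ℝ) : ℂ) with hc
    set f₀ : Lp ℂ p μ := indicatorConstLp p F.measurableSet hμF c with hf₀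
    apply not_sigmaPorous_of_ball_subset (x := f₀) (r := 1 / β) (by positivity)
    intro g hg
    intro n hn
    have hdist : eLpNorm (⇑(g - f₀)) p μ < ENNReal.ofReal (1 / β) := by
      have h1 : dist g f₀ < 1 / β := Metric.mem_ball.mp hg
      rw [dist_eq_norm, Lp.norm_def] at h1
      exact (ENNReal.lt_ofReal_iff_toReal_lt (Lp.eLpNorm_ne_top _)).mpr h1
    have hval : ∀ t ∈ F, 1 / β ≤ ‖(g : G → ℂ) t‖ := by
      intro t ht
      have h1 : ‖(⇑(g - f₀)) t‖ < 1 / β :=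
        norm_lt_of_eLpNorm_lt hp0 hp (by positivity) hdist (hsing1 t)
      have h2 : (⇑(g - f₀)) t = (g : G → ℂ) t - (f₀ : G → ℂ) t :=
        ae_eq_at_atom (Lp.coeFn_sub g f₀) (hne0 t)
      have h3 : (f₀ : G → ℂ) t = c := by
        have h4 := ae_eq_at_atom
          (indicatorConstLp_coeFn (p := p) (μ := μ) (hs := F.measurableSet)
            (hμs := hμF) (c := c)) (hne0 t)
        rw [hf₀, h4]
        exact Set.indicator_of_mem (by exact_mod_cast ht) _
      have h5 : ‖c‖ - ‖(g : G → ℂ) t - c‖ ≤ ‖(g : G → ℂ) t‖ := by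
        have h6 := norm_sub_norm_le c ((g : G → ℂ) t)
        rw [norm_sub_rev] at h6
        linarith
      have h7 : ‖c‖ = 2 / β := by
        rw [hc, Complex.norm_real, Real.norm_eq_abs, abs_of_pos (by positivity)]
      have h8 : ‖(g : G → ℂ) t - c‖ < 1 / β := by
        rw [← h3, ← h2]; exact h1
      have h9 : (2 / β : ℝ) = 2 * (1 / β) := by ring
      linarith
    set A : Finset G := F.image (fun t => a ^ γ n * t) with hA
    have hb : ∀ x ∈ A, 1 ≤ ‖Tpow a w (γ n) (⇑g) x -
        (F : Set G).indicator (fun _ => (1 : ℂ)) x‖ := by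
      intro x hx
      obtain ⟨t, ht, rfl⟩ := Finset.mem_image.mp hx
      have hnotin : a ^ γ n * t ∉ F := hdisj n hn t ht
      have hind : (F : Set G).indicator (fun _ => (1 : ℂ)) (a ^ γ n * t) = 0 :=
        Set.indicator_of_notMem (by simpa using hnotin) _
      rw [hind, sub_zero, hTnorm]
      have h10 := hβle n hn t ht
      have h11 := hval t ht
      calc (1 : ℝ) = β * (1 / β) := by field_simp
        _ ≤ (∏ k ∈ Finset.Icc 1 (γ n), w (a ^ k * t)) * ‖(g : G → ℂ) t‖ :=
            mul_le_mul h10 h11 (by positivity) (le_trans hβ0.le h10)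
    have hkey := key_lower μ hp0 hp A hb
    have hcard : A.card = F.card :=
      Finset.card_image_of_injective F (mul_right_injective (a ^ γ n))
    have hμA : μ (A : Set G) = μ (F : Set G) := by
      rw [hμfin, hμfin, hcard]
    rw [← hμA]
    exact hkey
end

section
/- Let $p\geq 1$, $G$ a discrete group, $a\in G$ of infinite order, $\mu$ the counting measure on $G$, and $(\gamma_n)_n$ an unbounded sequence of non-negative integers. Let $w:G\to(0,\infty)$ be bounded such that for some $t\in G$, $\inf_n\prod_{k=1}^{\gamma_n}w(a^k t)>0$. Then $\{f\in\ell^p(G): \|T_{a,w,p}^{\gamma_n}f-\chi_{\{t\}}\|_p\geq 1 \text{ for all } n\}$ is not $\sigma$-porous. -/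
open MeasureTheory Metric Set ENNReal

lemma myae_count {α : Type*} [MeasurableSpace α] [MeasurableSingletonClass α] {P : α → Prop}
    (h : ∀ᵐ x ∂(Measure.count : Measure α), P x) (x : α) : P x := by
  by_contra hx
  rw [MeasureTheory.ae_iff] at h
  have h1 : (1 : ℝ≥0∞) ≤ Measure.count {y | ¬ P y} := by
    rw [← Measure.count_singleton x]
    exact measure_mono (by simpa using hx)
  simp [h] at h1

lemma mypoint_le {α : Type*} [MeasurableSpace α] [MeasurableSingletonClass α] {p : ℝ≥0∞}
    (hp0 : p ≠ 0) (hp : p ≠ ⊤) (g : α → ℂ) (x₀ : α) :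
    (‖g x₀‖₊ : ℝ≥0∞) ≤ eLpNorm g p Measure.count := by
  have h1 : eLpNorm (({x₀} : Set α).indicator (fun _ => g x₀)) p Measure.count
      = (‖g x₀‖₊ : ℝ≥0∞) := by
    rw [eLpNorm_indicator_const (measurableSet_singleton x₀) hp0 hp, Measure.count_singleton,
      ENNReal.one_rpow, mul_one, enorm_eq_nnnorm]
  rw [← h1]
  refine eLpNorm_mono fun x => ?_
  by_cases hx : x = x₀ <;> simp [Set.indicator, hx]

lemma myporous_nwd {X : Type*} [MetricSpace X] {lam : ℝ} (hl : 0 < lam) {S : Set X}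
    (h : Porous lam S) : IsNowhereDense S := by
  rw [IsNowhereDense, Set.eq_empty_iff_forall_notMem]
  intro x hx
  obtain ⟨r, hr, hball⟩ := Metric.mem_nhds_iff.1 (mem_interior_iff_mem_nhds.1 hx)
  have hxc : x ∈ closure S := interior_subset hx
  obtain ⟨z, hzS, hzx⟩ := Metric.mem_closure_iff.1 hxc (r/2) (by linarith)
  obtain ⟨y, hy, hyz, hempty⟩ := h z hzS (r/2) (by linarith)
  have hyc : y ∈ closure S := by
    apply hball
    rw [Metric.mem_ball] at hy ⊢
    have h3 := dist_triangle y z x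
    rw [dist_comm x z] at hzx
    linarith
  have hd : 0 < lam * dist z y := mul_pos hl (dist_pos.2 (Ne.symm hyz))
  obtain ⟨s, hsS, hs⟩ := Metric.mem_closure_iff.1 hyc _ hd
  exact absurd hempty (Set.nonempty_iff_ne_empty.1 ⟨s, Metric.mem_ball'.2 hs, hsS⟩)

/-- For a discrete group with counting measure, `a` of infinite order, `(γ_n)` unbounded, and
a bounded weight with `inf_n ∏_{k=1}^{γ_n} w(a^k t) > 0` for some `t`, the set
`{f ∈ ℓ^p(G) : ‖T^{γ_n} f - χ_{t}‖_p ≥ 1 for all n}` is not `σ`-porous. -/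
theorem stmt_8 {G : Type*} [Group G] [MeasurableSpace G] [MeasurableSingletonClass G]
    (p : ℝ≥0∞) [Fact (1 ≤ p)] (hp : p ≠ ⊤)
    (a : G) (ha : ¬ IsOfFinOrder a)
    (γ : ℕ → ℕ) (hγ : ∀ M : ℕ, ∃ n, M ≤ γ n)
    (w : G → ℝ) (hw0 : ∀ x, 0 < w x) (hwb : ∃ C, ∀ x, w x ≤ C)
    (t : G) (hβ : ∃ c > (0 : ℝ), ∀ n, c ≤ ∏ k ∈ Finset.Icc 1 (γ n), w (a ^ k * t)) :
    ¬ SigmaPorous {f : Lp ℂ p (Measure.count : Measure G) | ∀ n,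
      1 ≤ eLpNorm (fun x => Tpow a w (γ n) (⇑f) x -
        ({t} : Set G).indicator (fun _ => (1 : ℂ)) x) p Measure.count} := by
  rintro ⟨S, hS, hE⟩
  obtain ⟨c, hc, hcle⟩ := hβ
  have hp0 : p ≠ 0 := by
    have h1 : (1 : ℝ≥0∞) ≤ p := Fact.out
    intro h; simp [h] at h1
  set R : ℝ := 3 + 2 / c with hR
  have hRpos : (0 : ℝ) < R := by positivity
  have hμt : (Measure.count : Measure G) {t} ≠ ⊤ := by
    rw [Measure.count_singleton]; exact one_ne_top
  set f₀ : Lp ℂ p (Measure.count : Measure G) :=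
    indicatorConstLp p (measurableSet_singleton t) hμt ((R : ℂ)) with hf₀
  have hball : Metric.ball f₀ 1 ⊆ {f : Lp ℂ p (Measure.count : Measure G) | ∀ n,
      1 ≤ eLpNorm (fun x => Tpow a w (γ n) (⇑f) x -
        ({t} : Set G).indicator (fun _ => (1 : ℂ)) x) p Measure.count} := by
    intro f hf
    have hsub : ∀ x, (⇑(f - f₀)) x = f x - f₀ x := myae_count (Lp.coeFn_sub f f₀)
    have hf₀t : f₀ t = (R : ℂ) := by
      have h1 := myae_count (indicatorConstLp_coeFn
        (p := p) (μ := (Measure.count : Measure G))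
        (hs := measurableSet_singleton t) (hμs := hμt) (c := (R : ℂ))) t
      simpa using h1
    have hft : ‖f t - (R : ℂ)‖ < 1 := by
      have h1 : (‖(⇑(f - f₀)) t‖₊ : ℝ≥0∞) ≤ eLpNorm (⇑(f - f₀)) p Measure.count :=
        mypoint_le hp0 hp _ t
      have h2 : eLpNorm (⇑(f - f₀)) p Measure.count < 1 := by
        have hd : dist f f₀ < 1 := Metric.mem_ball.1 hf
        rw [Lp.dist_def,
          eLpNorm_congr_ae (Lp.coeFn_sub f f₀).symm] at hd
        have hne : eLpNorm (⇑(f - f₀)) p Measure.count ≠ ⊤ := Lp.eLpNorm_ne_top (f - f₀)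
        rw [show (1 : ℝ) = (1 : ℝ≥0∞).toReal by simp] at hd
        exact (ENNReal.toReal_lt_toReal hne one_ne_top).1 hd
      have h3 : (‖(⇑(f - f₀)) t‖₊ : ℝ≥0∞) < 1 := lt_of_le_of_lt h1 h2
      have h4 : ‖(⇑(f - f₀)) t‖ < 1 := by exact_mod_cast h3
      rwa [hsub, hf₀t] at h4
    have hnft : 2 + 2 / c < ‖f t‖ := by
      have h5 : ‖((R : ℂ))‖ ≤ ‖f t‖ + ‖f t - (R : ℂ)‖ := by
        simpa using norm_sub_le (f t) (f t - (R : ℂ))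
      have h6 : ‖((R : ℂ))‖ = R := by
        rw [Complex.norm_real, Real.norm_eq_abs, abs_of_pos hRpos]
      rw [h6] at h5
      simp only [hR] at h5
      linarith
    intro n
    rcases Nat.eq_zero_or_pos (γ n) with hm | hm
    · -- γ n = 0
      have hval : Tpow a w (γ n) (⇑f) t -
          ({t} : Set G).indicator (fun _ => (1 : ℂ)) t = f t - 1 := by
        simp [Tpow, hm]
      have hv : (1 : ℝ) ≤ ‖f t - (1 : ℂ)‖ := by
        have h5 : ‖f t‖ ≤ ‖f t - (1 : ℂ)‖ + ‖(1 : ℂ)‖ := by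
          simpa using norm_add_le (f t - 1) (1 : ℂ)
        have hcinv : (0 : ℝ) < 2 / c := by positivity
        simp only [norm_one] at h5
        linarith
      refine le_trans ?_ (mypoint_le hp0 hp _ t)
      rw [hval]
      exact_mod_cast hv
    · -- γ n > 0
      set m := γ n with hmdef
      set x₀ := a ^ m * t with hx₀def
      have hx₀t : x₀ ∉ ({t} : Set G) := by
        simp only [Set.mem_singleton_iff, hx₀def]
        intro hx
        have ham : a ^ m = 1 := by
          have h7 : a ^ m * t = 1 * t := by rw [hx, one_mul]
          exact mul_right_cancel h7
        exact ha (isOfFinOrder_iff_pow_eq_one.2 ⟨m, hm, ham⟩)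
      have h1 : ∀ k ∈ Finset.range m, (a ^ k)⁻¹ * x₀ = a ^ (m - k) * t := by
        intro k hk
        rw [Finset.mem_range] at hk
        have h8 : a ^ m = a ^ k * a ^ (m - k) := by
          rw [← pow_add]; congr 1; omega
        rw [hx₀def, ← mul_assoc, h8, ← mul_assoc, mul_assoc ((a ^ k)⁻¹), inv_mul_cancel_left]
      have h2 : (a ^ m)⁻¹ * x₀ = t := by
        rw [hx₀def, inv_mul_cancel_left]
      have hprodR : ∏ k ∈ Finset.range m, w ((a ^ k)⁻¹ * x₀)
          = ∏ k ∈ Finset.Icc 1 m, w (a ^ k * t) := by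
        rw [Finset.prod_congr rfl fun k hk => by rw [h1 k hk]]
        rw [← Finset.Ico_add_one_right_eq_Icc, Finset.prod_Ico_eq_prod_range]
        norm_num
        rw [← Finset.prod_range_reflect (fun i => w (a ^ (1 + i) * t)) m]
        refine Finset.prod_congr rfl fun j hj => ?_
        rw [Finset.mem_range] at hj
        have h9 : m - j = 1 + (m - 1 - j) := by omega
        rw [h9]
      have hval : Tpow a w m (⇑f) x₀ -
          ({t} : Set G).indicator (fun _ => (1 : ℂ)) x₀
          = ((∏ k ∈ Finset.Icc 1 m, w (a ^ k * t) : ℝ) : ℂ) * f t := by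
        simp only [Tpow, Set.indicator_of_notMem hx₀t, sub_zero, h2]
        rw [← Complex.ofReal_prod, hprodR]
      have hPc : c ≤ ∏ k ∈ Finset.Icc 1 m, w (a ^ k * t) := hcle n
      have hv : (1 : ℝ) ≤ ‖((∏ k ∈ Finset.Icc 1 m, w (a ^ k * t) : ℝ) : ℂ) * f t‖ := by
        rw [norm_mul, Complex.norm_real, Real.norm_eq_abs,
          abs_of_pos (lt_of_lt_of_le hc hPc)]
        have h10 : c * (2 + 2 / c) ≤ (∏ k ∈ Finset.Icc 1 m, w (a ^ k * t)) * ‖f t‖ := by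
          apply mul_le_mul hPc (le_of_lt hnft) (by positivity)
            (le_of_lt (lt_of_lt_of_le hc hPc))
        have h11 : c * (2 + 2 / c) = 2 * c + 2 := by
          field_simp
        linarith
      refine le_trans ?_ (mypoint_le hp0 hp _ x₀)
      rw [hval]
      exact_mod_cast hv
  have hmeag : IsMeagre (⋃ n, S n) := by
    refine isMeagre_iUnion fun n => ?_
    obtain ⟨lam, h0, h1, hP⟩ := hS n
    exact isMeagre_iff_countable_union_isNowhereDense.2
      ⟨{S n}, by simpa using myporous_nwd h0 hP, Set.countable_singleton _, by simp⟩
  have hdense : Dense ((⋃ n, S n)ᶜ) := dense_of_mem_residual hmeag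
  obtain ⟨g, hg1, hg2⟩ := hdense.exists_mem_open Metric.isOpen_ball
    ⟨f₀, Metric.mem_ball_self one_pos⟩
  exact hg1 (hE ▸ hball hg2)
end
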